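/- arXiv:2307.08641 — 10 statements merged into one kernel-verified Lean document; each statement's English description precedes it below -/
import Mathlib

section
/- Assume the shape function setting. For every N > 0 there exist constants M ≥ e and d₁ ≥ d₂ > 0 such that for all t ∈ (0,T] and all real r ≥ M satisfying Λ(t)·r = N·ln r, one has −d₁·ln r ≤ ln λ(t) ≤ −d₂·ln r. -/
/-- `Λ(t) = ∫₀ᵗ λ(s) ds`. -/
noncomputable def Lam (lam : ℝ → ℝ) (t : ℝ) : ℝ := ∫ s in (0:ℝ)..t, lam s

/-- Lemma 2.2 of the paper: at the zone-boundary time (where `Λ(t)·r = N·ln r`,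
`r` abstracting `⟨x⟩⟨ξ⟩`), one has `−d₁·ln r ≤ ln λ(t) ≤ −d₂·ln r`. -/
theorem log_lambda_bounds_at_zone_boundary
    (T : ℝ) (hT : 0 < T) (lam lam' : ℝ → ℝ)
    (hsmooth : ContDiffOn ℝ (⊤ : ℕ∞) lam (Set.Icc 0 T))
    (hderiv : ∀ t ∈ Set.Icc 0 T, HasDerivWithinAt lam (lam' t) (Set.Icc 0 T) t)
    (hlam0 : lam 0 = 0) (hlam'0 : lam' 0 = 0)
    (hlampos : ∀ t ∈ Set.Ioc 0 T, 0 < lam t)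
    (hlam'pos : ∀ t ∈ Set.Ioc 0 T, 0 < lam' t)
    (c₁ C₁ : ℝ) (hc₁ : 1/2 < c₁) (hC₁0 : 0 < C₁) (hC₁1 : C₁ < 1)
    (hlow : ∀ t ∈ Set.Ioc 0 T, c₁ * (lam t / Lam lam t) ≤ lam' t / lam t)
    (hhigh : ∀ t ∈ Set.Ioc 0 T, lam' t / lam t ≤ C₁ * (lam t / Lam lam t)) :
    ∀ N : ℝ, 0 < N → ∃ M : ℝ, Real.exp 1 ≤ M ∧ ∃ d₁ d₂ : ℝ, 0 < d₂ ∧ d₂ ≤ d₁ ∧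
      ∀ t ∈ Set.Ioc 0 T, ∀ r : ℝ, M ≤ r → Lam lam t * r = N * Real.log r →
        -d₁ * Real.log r ≤ Real.log (lam t) ∧
        Real.log (lam t) ≤ -d₂ * Real.log r := by
  intro N hN
  have hc₁pos : (0:ℝ) < c₁ := lt_trans (by norm_num) hc₁
  have hcont : ContinuousOn lam (Set.Icc 0 T) := hsmooth.continuousOn
  have hTmem : T ∈ Set.Icc (0:ℝ) T := ⟨hT.le, le_rfl⟩
  have hint : ∀ t ∈ Set.Icc (0:ℝ) T, IntervalIntegrable lam MeasureTheory.volume 0 t := by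
    intro t ht
    exact (hcont.mono (Set.Icc_subset_Icc le_rfl ht.2)).intervalIntegrable_of_Icc ht.1
  have hΛpos : ∀ t ∈ Set.Ioc (0:ℝ) T, 0 < Lam lam t := by
    intro t ht
    exact intervalIntegral.intervalIntegral_pos_of_pos_on (hint t ⟨ht.1.le, ht.2⟩)
      (fun x hx => hlampos x ⟨hx.1, hx.2.le.trans ht.2⟩) ht.1
  have hΛderiv : ∀ x ∈ Set.Ioo (0:ℝ) T, HasDerivAt (Lam lam) (lam x) x := by
    intro x hx
    have hxT : x ∈ Set.Icc (0:ℝ) T := ⟨hx.1.le, hx.2.le⟩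
    have hnhds : Set.Icc (0:ℝ) T ∈ nhds x := Icc_mem_nhds hx.1 hx.2
    have hmeas : StronglyMeasurableAtFilter lam (nhds x) MeasureTheory.volume :=
      ⟨Set.Icc 0 T, hnhds, hcont.aestronglyMeasurable measurableSet_Icc⟩
    have hca : ContinuousAt lam x := hcont.continuousAt hnhds
    exact intervalIntegral.integral_hasDerivAt_right (hint x hxT) hmeas hca
  have hlderiv : ∀ x ∈ Set.Ioo (0:ℝ) T, HasDerivAt lam (lam' x) x := by
    intro x hx
    exact (hderiv x ⟨hx.1.le, hx.2.le⟩).hasDerivAt (Icc_mem_nhds hx.1 hx.2)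
  have hΛcont : ContinuousOn (Lam lam) (Set.Icc 0 T) := by
    have h0 : (0:ℝ) ∈ Set.uIcc (0:ℝ) T := by
      rw [Set.uIcc_of_le hT.le]; exact Set.left_mem_Icc.mpr hT.le
    have := intervalIntegral.continuousOn_primitive_interval' (hint T hTmem) h0
    rwa [Set.uIcc_of_le hT.le] at this
  set K₂ : ℝ := Real.log (lam T) - c₁ * Real.log (Lam lam T) with hK₂def
  set K₁ : ℝ := Real.log (lam T) - C₁ * Real.log (Lam lam T) with hK₁def
  have hTIoc : T ∈ Set.Ioc (0:ℝ) T := ⟨hT, le_rfl⟩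
  -- upper comparison: log λ(t) ≤ K₂ + c₁ log Λ(t)
  have upper : ∀ t ∈ Set.Ioc (0:ℝ) T, Real.log (lam t) ≤ K₂ + c₁ * Real.log (Lam lam t) := by
    intro t ht
    have hsub : Set.Icc t T ⊆ Set.Icc 0 T := Set.Icc_subset_Icc ht.1.le le_rfl
    have hsub' : Set.Icc t T ⊆ Set.Ioc 0 T := fun x hx => ⟨lt_of_lt_of_le ht.1 hx.1, hx.2⟩
    set f : ℝ → ℝ := fun s => Real.log (lam s) - c₁ * Real.log (Lam lam s) with hfdef
    have hfc : ContinuousOn f (Set.Icc t T) := by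
      apply ContinuousOn.sub
      · exact (hcont.mono hsub).log (fun x hx => (hlampos x (hsub' hx)).ne')
      · exact continuousOn_const.mul
          ((hΛcont.mono hsub).log (fun x hx => (hΛpos x (hsub' hx)).ne'))
    have hfd : ∀ x ∈ Set.Ioo t T,
        HasDerivAt f (lam' x / lam x - c₁ * (lam x / Lam lam x)) x := by
      intro x hx
      have hx0 : x ∈ Set.Ioo (0:ℝ) T := ⟨ht.1.trans hx.1, hx.2⟩
      have hx0' : x ∈ Set.Ioc (0:ℝ) T := ⟨hx0.1, hx0.2.le⟩
      exact ((hlderiv x hx0).log (hlampos x hx0').ne').sub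
        (((hΛderiv x hx0).log (hΛpos x hx0').ne').const_mul c₁)
    have hmono : MonotoneOn f (Set.Icc t T) := by
      apply monotoneOn_of_deriv_nonneg (convex_Icc t T) hfc
      · intro x hx
        rw [interior_Icc] at hx
        exact (hfd x hx).differentiableAt.differentiableWithinAt
      · intro x hx
        rw [interior_Icc] at hx
        rw [(hfd x hx).deriv]
        have hx0' : x ∈ Set.Ioc (0:ℝ) T := ⟨ht.1.trans hx.1, hx.2.le⟩
        exact sub_nonneg.mpr (hlow x hx0')
    have := hmono (Set.left_mem_Icc.mpr ht.2) (Set.right_mem_Icc.mpr ht.2) ht.2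
    simp only [hfdef, hK₂def] at this ⊢
    linarith
  -- lower comparison: K₁ + C₁ log Λ(t) ≤ log λ(t)
  have lower : ∀ t ∈ Set.Ioc (0:ℝ) T, K₁ + C₁ * Real.log (Lam lam t) ≤ Real.log (lam t) := by
    intro t ht
    have hsub : Set.Icc t T ⊆ Set.Icc 0 T := Set.Icc_subset_Icc ht.1.le le_rfl
    have hsub' : Set.Icc t T ⊆ Set.Ioc 0 T := fun x hx => ⟨lt_of_lt_of_le ht.1 hx.1, hx.2⟩
    set g : ℝ → ℝ := fun s => Real.log (lam s) - C₁ * Real.log (Lam lam s) with hgdef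
    have hgc : ContinuousOn g (Set.Icc t T) := by
      apply ContinuousOn.sub
      · exact (hcont.mono hsub).log (fun x hx => (hlampos x (hsub' hx)).ne')
      · exact continuousOn_const.mul
          ((hΛcont.mono hsub).log (fun x hx => (hΛpos x (hsub' hx)).ne'))
    have hgd : ∀ x ∈ Set.Ioo t T,
        HasDerivAt g (lam' x / lam x - C₁ * (lam x / Lam lam x)) x := by
      intro x hx
      have hx0 : x ∈ Set.Ioo (0:ℝ) T := ⟨ht.1.trans hx.1, hx.2⟩
      have hx0' : x ∈ Set.Ioc (0:ℝ) T := ⟨hx0.1, hx0.2.le⟩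
      exact ((hlderiv x hx0).log (hlampos x hx0').ne').sub
        (((hΛderiv x hx0).log (hΛpos x hx0').ne').const_mul C₁)
    have hanti : AntitoneOn g (Set.Icc t T) := by
      apply antitoneOn_of_deriv_nonpos (convex_Icc t T) hgc
      · intro x hx
        rw [interior_Icc] at hx
        exact (hgd x hx).differentiableAt.differentiableWithinAt
      · intro x hx
        rw [interior_Icc] at hx
        rw [(hgd x hx).deriv]
        have hx0' : x ∈ Set.Ioc (0:ℝ) T := ⟨ht.1.trans hx.1, hx.2.le⟩
        exact sub_nonpos.mpr (hhigh x hx0')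
    have := hanti (Set.left_mem_Icc.mpr ht.2) (Set.right_mem_Icc.mpr ht.2) ht.2
    simp only [hgdef, hK₁def] at this ⊢
    linarith
  -- choose constants
  set L : ℝ := max (max 64 (4*(K₂ + c₁*Real.log N)/c₁)) (max 1 (-K₁ - C₁*Real.log N)) with hLdef
  have hL1 : (1:ℝ) ≤ L := (le_max_left 1 _).trans (le_max_right _ _)
  refine ⟨Real.exp L, Real.exp_le_exp.mpr hL1, max (c₁/2) (C₁+1), c₁/2, by linarith, le_max_left _ _, ?_⟩
  intro t ht r hMr heq
  have hrpos : (0:ℝ) < r := lt_of_lt_of_le (Real.exp_pos L) hMr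
  have hlogr : L ≤ Real.log r := by
    rw [← Real.log_exp L]
    exact Real.log_le_log (Real.exp_pos L) hMr
  have hlogr1 : (1:ℝ) ≤ Real.log r := hL1.trans hlogr
  have hlogrpos : (0:ℝ) < Real.log r := lt_of_lt_of_le one_pos hlogr1
  have hΛeq : Lam lam t = N * Real.log r / r := by
    field_simp at heq ⊢; linarith
  have hΛlog : Real.log (Lam lam t) = Real.log N + Real.log (Real.log r) - Real.log r := by
    rw [hΛeq, Real.log_div (by positivity) hrpos.ne', Real.log_mul hN.ne' hlogrpos.ne']
  -- bound log log r
  have hll : Real.log (Real.log r) ≤ 2 * Real.sqrt (Real.log r) := by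
    have h1 : Real.log (Real.sqrt (Real.log r)) = Real.log (Real.log r) / 2 :=
      Real.log_sqrt hlogrpos.le
    have h2 : Real.log (Real.sqrt (Real.log r)) ≤ Real.sqrt (Real.log r) - 1 :=
      Real.log_le_sub_one_of_pos (Real.sqrt_pos.mpr hlogrpos)
    linarith
  have h64 : (64:ℝ) ≤ Real.log r := ((le_max_left _ _).trans (le_max_left _ _)).trans hlogr
  have hsq : Real.sqrt (Real.log r) ≤ Real.log r / 8 := by
    have h8 : (8:ℝ) ≤ Real.sqrt (Real.log r) :=
      Real.le_sqrt_of_sq_le (by nlinarith : (8:ℝ)^2 ≤ Real.log r)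
    nlinarith [Real.sq_sqrt hlogrpos.le, Real.sqrt_nonneg (Real.log r)]
  have hllr : Real.log (Real.log r) ≤ Real.log r / 4 := by linarith
  have hloglognn : (0:ℝ) ≤ Real.log (Real.log r) := Real.log_nonneg hlogr1
  constructor
  · -- lower bound
    have hKL : -K₁ - C₁*Real.log N ≤ Real.log r :=
      ((le_max_right _ _).trans (le_max_right _ _)).trans hlogr
    have h1 := lower t ht
    rw [hΛlog] at h1
    have hd1 : (C₁+1 : ℝ) ≤ max (c₁/2) (C₁+1) := le_max_right _ _
    nlinarith [mul_nonneg hC₁0.le hloglognn]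
  · -- upper bound
    have hK : 4*(K₂ + c₁*Real.log N)/c₁ ≤ Real.log r :=
      ((le_max_right _ _).trans (le_max_left _ _)).trans hlogr
    have hK' : K₂ + c₁*Real.log N ≤ c₁/4 * Real.log r := by
      rw [div_le_iff₀ hc₁pos] at hK
      linarith
    have h1 := upper t ht
    rw [hΛlog] at h1
    have h5 : c₁ * Real.log (Real.log r) ≤ c₁/4 * Real.log r := by
      nlinarith [hllr, hc₁pos.le]
    have hexp : c₁ * (Real.log N + Real.log (Real.log r) - Real.log r)
        = c₁*Real.log N + c₁*Real.log (Real.log r) - c₁*Real.log r := by ring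
    rw [mul_sub, mul_add] at h1
    linarith
end

section
/- Assume the shape function setting. For every N > 0 there exist constants M ≥ e and d₁ > 0 such that: whenever t ∈ (0,T] and r ≥ M satisfy Λ(t)·r ≥ N·ln r, and there exists r_t ≥ M with Λ(t)·r_t = N·ln r_t, then λ(t) < 1 and |ln λ(t)|/(r·Λ(t)) ≤ d₁/N; equivalently 1/Λ(t) ≤ d₁·r/(N·|ln λ(t)|). -/
set_option maxHeartbeats 1000000

/-- Remark 2.3 of the paper: in the hyperbolic zone (`Λ(t)·r ≥ N·ln r`), provided a
zone-boundary solution `r_t` (with `Λ(t)·r_t = N·ln r_t`) exists, one has `λ(t) < 1` and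
`|ln λ(t)|/(r·Λ(t)) ≤ d₁/N`, equivalently `1/Λ(t) ≤ d₁·r/(N·|ln λ(t)|)`. -/
theorem hyperbolic_zone_log_lambda_over_Lambda_bound
    (T : ℝ) (hT : 0 < T) (lam lam' : ℝ → ℝ)
    (hsmooth : ContDiffOn ℝ (⊤ : ℕ∞) lam (Set.Icc 0 T))
    (hderiv : ∀ t ∈ Set.Icc 0 T, HasDerivWithinAt lam (lam' t) (Set.Icc 0 T) t)
    (hlam0 : lam 0 = 0) (hlam'0 : lam' 0 = 0)
    (hlampos : ∀ t ∈ Set.Ioc 0 T, 0 < lam t)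
    (hlam'pos : ∀ t ∈ Set.Ioc 0 T, 0 < lam' t)
    (c₁ C₁ : ℝ) (hc₁ : 1/2 < c₁) (hC₁0 : 0 < C₁) (hC₁1 : C₁ < 1)
    (hlow : ∀ t ∈ Set.Ioc 0 T, c₁ * (lam t / Lam lam t) ≤ lam' t / lam t)
    (hhigh : ∀ t ∈ Set.Ioc 0 T, lam' t / lam t ≤ C₁ * (lam t / Lam lam t)) :
    ∀ N : ℝ, 0 < N → ∃ M : ℝ, Real.exp 1 ≤ M ∧ ∃ d₁ : ℝ, 0 < d₁ ∧
      ∀ t ∈ Set.Ioc 0 T, ∀ r : ℝ, M ≤ r →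
        N * Real.log r ≤ Lam lam t * r →
        (∃ rt : ℝ, M ≤ rt ∧ Lam lam t * rt = N * Real.log rt) →
        lam t < 1 ∧
        |Real.log (lam t)| / (r * Lam lam t) ≤ d₁ / N ∧
        1 / Lam lam t ≤ d₁ * r / (N * |Real.log (lam t)|) := by
  intro N hN
  have hc₁0 : (0:ℝ) < c₁ := lt_trans (by norm_num) hc₁
  have hcont : ContinuousOn lam (Set.Icc 0 T) := hsmooth.continuousOn
  -- integrability and continuity of Λ
  have hInt : MeasureTheory.IntegrableOn lam (Set.uIcc 0 T) := by
    rw [Set.uIcc_of_le hT.le]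
    exact hcont.integrableOn_Icc
  have hLamCont : ContinuousOn (Lam lam) (Set.Icc 0 T) := by
    have := intervalIntegral.continuousOn_primitive_interval hInt
    rwa [Set.uIcc_of_le hT.le] at this
  have hii : ∀ t ∈ Set.Ioc 0 T, IntervalIntegrable lam MeasureTheory.volume 0 t := by
    intro t ht
    apply ContinuousOn.intervalIntegrable
    rw [Set.uIcc_of_le ht.1.le]
    exact hcont.mono (Set.Icc_subset_Icc le_rfl ht.2)
  have hLamPos : ∀ t ∈ Set.Ioc 0 T, 0 < Lam lam t := by
    intro t ht
    exact intervalIntegral.intervalIntegral_pos_of_pos_on (hii t ht)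
      (fun x hx => hlampos x ⟨hx.1, hx.2.le.trans ht.2⟩) ht.1
  -- derivatives in the interior
  have hLamDeriv : ∀ x ∈ Set.Ioo 0 T, HasDerivAt (Lam lam) (lam x) x := by
    intro x hx
    have hmem : Set.Icc (0:ℝ) T ∈ nhds x := Icc_mem_nhds hx.1 hx.2
    have hca : ContinuousAt lam x := hcont.continuousAt hmem
    exact intervalIntegral.integral_hasDerivAt_right (hii x ⟨hx.1, hx.2.le⟩)
      (ContinuousOn.stronglyMeasurableAtFilter isOpen_Ioo
        (hcont.mono Set.Ioo_subset_Icc_self) x hx) hca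
  have hlamDeriv : ∀ x ∈ Set.Ioo 0 T, HasDerivAt lam (lam' x) x := fun x hx =>
    (hderiv x ⟨hx.1.le, hx.2.le⟩).hasDerivAt (Icc_mem_nhds hx.1 hx.2)
  have key : ∀ c : ℝ, ∀ x ∈ Set.Ioo 0 T,
      HasDerivAt (fun y => Real.log (lam y) - c * Real.log (Lam lam y))
        (lam' x / lam x - c * (lam x / Lam lam x)) x := by
    intro c x hx
    have hlp := hlampos x ⟨hx.1, hx.2.le⟩
    have hLp := hLamPos x ⟨hx.1, hx.2.le⟩
    have h1 : HasDerivAt (fun y => Real.log (lam y)) (lam' x / lam x) x :=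
      (hlamDeriv x hx).log (ne_of_gt hlp)
    have h2 : HasDerivAt (fun y => Real.log (Lam lam y)) (lam x / Lam lam x) x :=
      (hLamDeriv x hx).log (ne_of_gt hLp)
    exact h1.sub (h2.const_mul c)
  -- continuity of the auxiliary functions on [t, T]
  have hFcont : ∀ c : ℝ, ∀ t ∈ Set.Ioc 0 T,
      ContinuousOn (fun y => Real.log (lam y) - c * Real.log (Lam lam y)) (Set.Icc t T) := by
    intro c t ht
    have hsub : Set.Icc t T ⊆ Set.Icc 0 T := Set.Icc_subset_Icc ht.1.le le_rfl
    apply ContinuousOn.sub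
    · exact (hcont.mono hsub).log fun y hy =>
        ne_of_gt (hlampos y ⟨lt_of_lt_of_le ht.1 hy.1, hy.2⟩)
    · exact continuousOn_const.mul ((hLamCont.mono hsub).log fun y hy =>
        ne_of_gt (hLamPos y ⟨lt_of_lt_of_le ht.1 hy.1, hy.2⟩))
  -- monotone comparison: log λ - c₁ log Λ is nondecreasing
  have hmono : ∀ t ∈ Set.Ioc 0 T,
      Real.log (lam t) - c₁ * Real.log (Lam lam t) ≤
        Real.log (lam T) - c₁ * Real.log (Lam lam T) := by
    intro t ht
    have hIoo : Set.Ioo t T ⊆ Set.Ioo 0 T := Set.Ioo_subset_Ioo ht.1.le le_rfl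
    have := monotoneOn_of_deriv_nonneg (convex_Icc t T) (hFcont c₁ t ht)
      (fun x hx => by
        rw [interior_Icc] at hx
        exact ((key c₁ x (hIoo hx)).differentiableAt).differentiableWithinAt)
      (fun x hx => by
        rw [interior_Icc] at hx
        rw [(key c₁ x (hIoo hx)).deriv]
        have hxm : x ∈ Set.Ioc 0 T := ⟨(hIoo hx).1, (hIoo hx).2.le⟩
        have := hlow x hxm
        linarith)
    exact this (Set.left_mem_Icc.2 ht.2) (Set.right_mem_Icc.2 ht.2) ht.2
  -- antitone comparison: log λ - C₁ log Λ is nonincreasing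
  have hanti : ∀ t ∈ Set.Ioc 0 T,
      Real.log (lam T) - C₁ * Real.log (Lam lam T) ≤
        Real.log (lam t) - C₁ * Real.log (Lam lam t) := by
    intro t ht
    have hIoo : Set.Ioo t T ⊆ Set.Ioo 0 T := Set.Ioo_subset_Ioo ht.1.le le_rfl
    have := antitoneOn_of_deriv_nonpos (convex_Icc t T) (hFcont C₁ t ht)
      (fun x hx => by
        rw [interior_Icc] at hx
        exact ((key C₁ x (hIoo hx)).differentiableAt).differentiableWithinAt)
      (fun x hx => by
        rw [interior_Icc] at hx
        rw [(key C₁ x (hIoo hx)).deriv]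
        have hxm : x ∈ Set.Ioc 0 T := ⟨(hIoo hx).1, (hIoo hx).2.le⟩
        have := hhigh x hxm
        linarith)
    exact this (Set.left_mem_Icc.2 ht.2) (Set.right_mem_Icc.2 ht.2) ht.2
  set GT : ℝ := Real.log (lam T) - c₁ * Real.log (Lam lam T) with hGT
  set FT : ℝ := Real.log (lam T) - C₁ * Real.log (Lam lam T) with hFT
  set ε : ℝ := Real.exp (-GT / c₁) / N with hε
  have hεpos : 0 < ε := div_pos (Real.exp_pos _) hN
  refine ⟨max (Real.exp 1) (4 / ε ^ 2 + 1), le_max_left _ _, ?_⟩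
  set M : ℝ := max (Real.exp 1) (4 / ε ^ 2 + 1) with hM
  have hM1 : Real.exp 1 ≤ M := le_max_left _ _
  have hMpos : 0 < M := lt_of_lt_of_le (Real.exp_pos 1) hM1
  have hM4 : 4 / ε ^ 2 < M := lt_of_lt_of_le (lt_add_one _) (le_max_right _ _)
  -- log M / M < ε
  have hsqrtpos : 0 < Real.sqrt M := Real.sqrt_pos.2 hMpos
  have hsq : Real.sqrt M * Real.sqrt M = M := Real.mul_self_sqrt hMpos.le
  have hlogM : Real.log M ≤ 2 * Real.sqrt M := by
    have h1 : Real.log (Real.sqrt M) = Real.log M / 2 := Real.log_sqrt hMpos.le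
    have h2 : Real.log (Real.sqrt M) ≤ Real.sqrt M - 1 :=
      Real.log_le_sub_one_of_pos hsqrtpos
    nlinarith
  have hMε : Real.log M / M < ε := by
    have h4 : 4 < ε ^ 2 * M := by
      rw [div_lt_iff₀ (by positivity)] at hM4
      linarith [hM4]
    have h5 : ε * Real.sqrt M * (ε * Real.sqrt M) = ε ^ 2 * M := by
      rw [show ε * Real.sqrt M * (ε * Real.sqrt M) = ε ^ 2 * (Real.sqrt M * Real.sqrt M) by ring,
        hsq]
    have hsε : 2 < ε * Real.sqrt M := by
      nlinarith [mul_pos hεpos hsqrtpos, h5]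
    rw [div_lt_iff₀ hMpos]
    nlinarith
  refine ⟨|FT| + C₁ * |Real.log N| + C₁ + 1, by positivity, ?_⟩
  set d₁ : ℝ := |FT| + C₁ * |Real.log N| + C₁ + 1 with hd₁
  intro t ht r hrM hr ⟨rt, hrtM, hrteq⟩
  have hLt : 0 < Lam lam t := hLamPos t ht
  have hlt : 0 < lam t := hlampos t ht
  have hrtpos : 0 < rt := lt_of_lt_of_le hMpos hrtM
  have hrpos : 0 < r := lt_of_lt_of_le hMpos hrM
  have hlogrt : 1 ≤ Real.log rt := (Real.le_log_iff_exp_le hrtpos).2 (le_trans hM1 hrtM)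
  have hlogr : 1 ≤ Real.log r := (Real.le_log_iff_exp_le hrpos).2 (le_trans hM1 hrM)
  -- Λ(t) is small
  have hLam_small : Lam lam t < Real.exp (-GT / c₁) := by
    have hmem1 : M ∈ {x : ℝ | Real.exp 1 ≤ x} := hM1
    have hmem2 : rt ∈ {x : ℝ | Real.exp 1 ≤ x} := le_trans hM1 hrtM
    have hanti' := Real.log_div_self_antitoneOn hmem1 hmem2 hrtM
    have hLeq : Lam lam t = N * (Real.log rt / rt) := by
      field_simp at hrteq ⊢
      linarith [hrteq]
    have : Lam lam t ≤ N * (Real.log M / M) := by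
      rw [hLeq]
      exact mul_le_mul_of_nonneg_left hanti' hN.le
    calc Lam lam t ≤ N * (Real.log M / M) := this
      _ < N * ε := by exact mul_lt_mul_of_pos_left hMε hN
      _ = Real.exp (-GT / c₁) := by rw [hε]; field_simp
  -- λ(t) < 1
  have hloglam_neg : Real.log (lam t) < 0 := by
    have h1 := hmono t ht
    have h2 : Real.log (Lam lam t) < -GT / c₁ :=
      (Real.log_lt_iff_lt_exp hLt).2 hLam_small
    have h3 : c₁ * Real.log (Lam lam t) < c₁ * (-GT / c₁) :=
      mul_lt_mul_of_pos_left h2 hc₁0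
    have h4 : c₁ * (-GT / c₁) = -GT := by field_simp
    rw [h4] at h3
    rw [hGT] at h1
    linarith
  have hlam_lt1 : lam t < 1 := (Real.log_neg_iff hlt).1 hloglam_neg
  -- find a boundary point r₀ with N log r₀ ≤ Λ(t) r
  obtain ⟨r₀, hr₀M, hr₀eq, hr₀le⟩ : ∃ r₀ : ℝ, M ≤ r₀ ∧
      Lam lam t * r₀ = N * Real.log r₀ ∧ N * Real.log r₀ ≤ Lam lam t * r := by
    rcases le_total rt r with h | h
    · exact ⟨rt, hrtM, hrteq, by rw [← hrteq]; exact mul_le_mul_of_nonneg_left h hLt.le⟩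
    · have hNr : N / r ≤ Lam lam t := by
        rw [div_le_iff₀ hrpos]
        calc N = N * 1 := (mul_one N).symm
          _ ≤ N * Real.log r := mul_le_mul_of_nonneg_left hlogr hN.le
          _ ≤ Lam lam t * r := hr
      have hfmono : MonotoneOn (fun s => Lam lam t * s - N * Real.log s) (Set.Icc r rt) := by
        apply monotoneOn_of_deriv_nonneg (convex_Icc r rt)
        · apply ContinuousOn.sub
          · exact continuousOn_const.mul continuousOn_id
          · exact continuousOn_const.mul (Real.continuousOn_log.mono
              (fun x hx => ne_of_gt (lt_of_lt_of_le hrpos hx.1)))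
        · intro x hx
          rw [interior_Icc] at hx
          have hxpos : 0 < x := lt_trans hrpos hx.1
          have hdx : HasDerivAt (fun s : ℝ => Lam lam t * s - N * Real.log s)
              (Lam lam t * 1 - N * x⁻¹) x :=
            ((hasDerivAt_id x).const_mul (Lam lam t)).sub
              ((Real.hasDerivAt_log (ne_of_gt hxpos)).const_mul N)
          exact hdx.differentiableAt.differentiableWithinAt
        · intro x hx
          rw [interior_Icc] at hx
          have hxpos : 0 < x := lt_trans hrpos hx.1
          have hdx : HasDerivAt (fun s : ℝ => Lam lam t * s - N * Real.log s)
              (Lam lam t * 1 - N * x⁻¹) x :=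
            ((hasDerivAt_id x).const_mul (Lam lam t)).sub
              ((Real.hasDerivAt_log (ne_of_gt hxpos)).const_mul N)
          rw [hdx.deriv]
          have hx' : N / x ≤ N / r := div_le_div_of_nonneg_left hN.le hrpos hx.1.le
          have hxx : N * x⁻¹ = N / x := by ring
          rw [mul_one, hxx]
          linarith [le_trans hx' hNr]
      have h0 : Lam lam t * r - N * Real.log r ≤ Lam lam t * rt - N * Real.log rt :=
        hfmono (Set.left_mem_Icc.2 h) (Set.right_mem_Icc.2 h) h
      have heq : Lam lam t * r = N * Real.log r := by
        have : Lam lam t * rt - N * Real.log rt = 0 := by rw [hrteq]; ring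
        rw [this] at h0
        linarith
      exact ⟨r, hrM, heq, le_of_eq heq.symm⟩
  have hr₀pos : 0 < r₀ := lt_of_lt_of_le hMpos hr₀M
  have hlogr₀ : 1 ≤ Real.log r₀ := (Real.le_log_iff_exp_le hr₀pos).2 (le_trans hM1 hr₀M)
  -- bound -log Λ
  have hlogLam : -Real.log (Lam lam t) ≤ Real.log r₀ + |Real.log N| := by
    have hLeq : Lam lam t = N * Real.log r₀ / r₀ := by
      field_simp at hr₀eq ⊢
      linarith [hr₀eq]
    have hlr₀pos : 0 < Real.log r₀ := lt_of_lt_of_le one_pos hlogr₀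
    have : Real.log (Lam lam t) = Real.log N + Real.log (Real.log r₀) - Real.log r₀ := by
      rw [hLeq, Real.log_div (by positivity) (ne_of_gt hr₀pos),
        Real.log_mul (ne_of_gt hN) (ne_of_gt hlr₀pos)]
    rw [this]
    have h1 : 0 ≤ Real.log (Real.log r₀) := Real.log_nonneg hlogr₀
    have h2 : -Real.log N ≤ |Real.log N| := neg_le_abs _
    linarith
  -- bound |log λ|
  have habs : |Real.log (lam t)| = -Real.log (lam t) := abs_of_neg hloglam_neg
  have hbound : |Real.log (lam t)| ≤ d₁ * Real.log r₀ := by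
    rw [habs]
    have h1 := hanti t ht
    rw [hFT] at h1
    have h2 : -Real.log (lam t) ≤ -FT + C₁ * (-Real.log (Lam lam t)) := by
      rw [hFT]; linarith
    have h3 : -FT ≤ |FT| := neg_le_abs _
    have h4 : C₁ * (-Real.log (Lam lam t)) ≤ C₁ * (Real.log r₀ + |Real.log N|) :=
      mul_le_mul_of_nonneg_left hlogLam hC₁0.le
    have h5 : -Real.log (lam t) ≤ |FT| + C₁ * |Real.log N| + C₁ * Real.log r₀ := by linarith
    have h6 : |FT| ≤ |FT| * Real.log r₀ := le_mul_of_one_le_right (abs_nonneg _) hlogr₀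
    have h7 : C₁ * |Real.log N| ≤ C₁ * |Real.log N| * Real.log r₀ :=
      le_mul_of_one_le_right (by positivity) hlogr₀
    have h8 : 0 ≤ Real.log r₀ := by linarith
    rw [hd₁]
    nlinarith
  have hkey : N * |Real.log (lam t)| ≤ d₁ * (Lam lam t * r) := by
    have h1 : N * |Real.log (lam t)| ≤ N * (d₁ * Real.log r₀) :=
      mul_le_mul_of_nonneg_left hbound hN.le
    have hd₁pos : (0:ℝ) < d₁ := by rw [hd₁]; positivity
    have h2 : N * (d₁ * Real.log r₀) = d₁ * (N * Real.log r₀) := by ring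
    have h3 : d₁ * (N * Real.log r₀) ≤ d₁ * (Lam lam t * r) :=
      mul_le_mul_of_nonneg_left hr₀le hd₁pos.le
    linarith
  have hd₁pos : (0:ℝ) < d₁ := by rw [hd₁]; positivity
  have habspos : 0 < |Real.log (lam t)| := abs_pos.2 (ne_of_lt hloglam_neg)
  refine ⟨hlam_lt1, ?_, ?_⟩
  · rw [div_le_div_iff₀ (by positivity) hN]
    nlinarith
  · rw [div_le_div_iff₀ hLt (by positivity)]
    nlinarith
end

section
/- Let T > 0, let λ : [0,T] → ℝ be continuously differentiable with λ(0) = 0, and set Λ(t) := ∫₀ᵗ λ(s) ds. Let f, g : ℝ → ℝ be twice continuously differentiable. Define u(t,x) := f(x·e^{−Λ(t)}) + ∫₀ᵗ g(x·e^{2Λ(s)−Λ(t)}) ds. Then for all (t,x) ∈ [0,T] × ℝ one has ∂²ₜu(t,x) + λ'(t)·x·∂ₓu(t,x) − λ(t)²·x·∂ₓu(t,x) − λ(t)²·x²·∂²ₓu(t,x) = 0, and moreover u(0,x) = f(x) and ∂ₜu(0,x) = g(x). -/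
/-- The explicit solution `u(t,x) = f(x·e^{−Λ(t)}) + ∫₀ᵗ g(x·e^{2Λ(s)−Λ(t)}) ds`
of Example 2.9 of the paper. -/
noncomputable def usol (lam f g : ℝ → ℝ) (t x : ℝ) : ℝ :=
  f (x * Real.exp (-(Lam lam t))) +
    ∫ s in (0:ℝ)..t, g (x * Real.exp (2 * Lam lam s - Lam lam t))

open Filter Topology Asymptotics Function Real

section

variable {E : Type*} [NormedAddCommGroup E] [NormedSpace ℝ E]

theorem hasFDerivAt_of_hasDerivAt_fst_of_continuousAt_partial_snd {f f₂ : ℝ × ℝ → E} {a : E}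
    {p : ℝ × ℝ} (h₁ : HasDerivAt (fun t => f (t, p.2)) a p.1)
    (h₂ : ∀ᶠ q in 𝓝 p, HasDerivAt (fun y => f (q.1, y)) (f₂ q) q.2)
    (hc : ContinuousAt f₂ p) :
    HasFDerivAt f ((ContinuousLinearMap.fst ℝ ℝ ℝ).smulRight a
      + (ContinuousLinearMap.snd ℝ ℝ ℝ).smulRight (f₂ p)) p := by
  have hfst : (fun q : ℝ × ℝ => f (q.1, p.2) - f p - (q.1 - p.1) • a)
      =o[𝓝 p] fun q => q - p :=
    ((hasDerivAt_iff_isLittleO.1 h₁).comp_tendsto (continuous_fst.tendsto p)).trans_isBigO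
      (isBigO_of_le _ fun q => norm_fst_le (q - p))
  have hsnd : (fun q : ℝ × ℝ => f q - f (q.1, p.2) - (q.2 - p.2) • f₂ p)
      =o[𝓝 p] fun q => q - p := by
    refine isLittleO_iff.2 fun ε hε => ?_
    obtain ⟨δ, hδ, hball⟩ := Metric.eventually_nhds_iff_ball.1
      (h₂.and (hc.eventually (Metric.closedBall_mem_nhds (f₂ p) hε)))
    filter_upwards [Metric.ball_mem_nhds p hδ] with q hq
    rw [← ball_prod_same] at hball hq
    have hmem : ∀ y ∈ Metric.ball p.2 δ, (q.1, y) ∈ Metric.ball p.1 δ ×ˢ Metric.ball p.2 δ :=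
      fun y hy => ⟨hq.1, hy⟩
    have hmvt := (convex_ball p.2 δ).norm_image_sub_le_of_norm_hasDerivWithin_le
      (f := fun y => f (q.1, y) - y • f₂ p) (f' := fun y => f₂ (q.1, y) - f₂ p)
      (fun y hy => (((hball _ (hmem y hy)).1).sub
        ((hasDerivAt_id y).smul_const (f₂ p))).hasDerivWithinAt |>.congr_deriv (by simp))
      (fun y hy => by simpa [dist_eq_norm] using (hball _ (hmem y hy)).2)
      (Metric.mem_ball_self hδ) hq.2
    calc ‖f q - f (q.1, p.2) - (q.2 - p.2) • f₂ p‖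
        = ‖f (q.1, q.2) - q.2 • f₂ p - (f (q.1, p.2) - p.2 • f₂ p)‖ := by
          rw [sub_smul]; congr 1; abel
      _ ≤ ε * ‖q.2 - p.2‖ := hmvt
      _ ≤ ε * ‖q - p‖ := mul_le_mul_of_nonneg_left (norm_snd_le (q - p)) hε.le
  rw [hasFDerivAt_iff_isLittleO]
  refine (hsnd.add hfst).congr_left fun q => ?_
  simp only [add_apply, ContinuousLinearMap.smulRight_apply,
    ContinuousLinearMap.coe_fst', ContinuousLinearMap.coe_snd', Prod.fst_sub, Prod.snd_sub]
  abel

theorem hasDerivAt_intervalIntegral_of_continuous_deriv {F F' : ℝ → ℝ → E}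
    (hF : ∀ y, Continuous (F · y)) (hF' : Continuous (uncurry F'))
    (hd : ∀ s y, HasDerivAt (F s) (F' s y) y) (a b y₀ : ℝ) :
    HasDerivAt (fun y => ∫ s in a..b, F s y) (∫ s in a..b, F' s y₀) y₀ := by
  obtain ⟨C, hC⟩ := (isCompact_uIcc.prod (isCompact_closedBall y₀ 1)).exists_bound_of_continuousOn
    hF'.continuousOn
  refine (intervalIntegral.hasDerivAt_integral_of_dominated_loc_of_deriv_le
    (F := fun y s => F s y) (F' := fun y s => F' s y) (bound := fun _ => C)
    (Metric.ball_mem_nhds y₀ one_pos)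
    (Eventually.of_forall fun y => (hF y).aestronglyMeasurable) ((hF y₀).intervalIntegrable a b)
    (hF'.comp (continuous_id.prodMk continuous_const)).aestronglyMeasurable
    (Eventually.of_forall fun s hs y hy => hC (s, y)
      ⟨Set.uIoc_subset_uIcc hs, Metric.ball_subset_closedBall hy⟩)
    intervalIntegrable_const
    (Eventually.of_forall fun s _ y _ => hd s y)).2

theorem hasFDerivAt_primitive_param [CompleteSpace E] {F F' : ℝ → ℝ → E}
    (hF : Continuous (uncurry F)) (hF' : Continuous (uncurry F'))
    (hd : ∀ s y, HasDerivAt (F s) (F' s y) y) (a : ℝ) (p : ℝ × ℝ) :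
    HasFDerivAt (fun q : ℝ × ℝ => ∫ s in a..q.1, F s q.2)
      ((ContinuousLinearMap.fst ℝ ℝ ℝ).smulRight (F p.1 p.2)
        + (ContinuousLinearMap.snd ℝ ℝ ℝ).smulRight (∫ s in a..p.1, F' s p.2)) p := by
  have hFy : ∀ y, Continuous (F · y) := fun y => hF.comp (continuous_id.prodMk continuous_const)
  refine hasFDerivAt_of_hasDerivAt_fst_of_continuousAt_partial_snd
    (f₂ := fun q => ∫ s in a..q.1, F' s q.2) ?_ ?_ ?_
  · exact ((hFy p.2).integral_hasStrictDerivAt a p.1).hasDerivAt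
  · exact Eventually.of_forall fun q =>
      hasDerivAt_intervalIntegral_of_continuous_deriv hFy hF' hd a q.1 q.2
  · exact (intervalIntegral.continuous_parametric_intervalIntegral_of_continuous
      (f := fun (q : ℝ × ℝ) s => F' s q.2)
      (hF'.comp (continuous_snd.prodMk (continuous_snd.comp continuous_fst)))
      continuous_fst).continuousAt

end

theorem hasDerivAt_Lam {lam : ℝ → ℝ} (hlam : Continuous lam) (t : ℝ) :
    HasDerivAt (Lam lam) (lam t) t :=
  (hlam.integral_hasStrictDerivAt 0 t).hasDerivAt

theorem Lam_zero (lam : ℝ → ℝ) : Lam lam 0 = 0 :=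
  intervalIntegral.integral_same

noncomputable def weightedPrimitive (lam h : ℝ → ℝ) (m : ℕ) (p : ℝ × ℝ) : ℝ :=
  ∫ s in (0:ℝ)..p.1, exp (Lam lam s) ^ m * h (p.2 * exp (Lam lam s) ^ 2)

theorem hasFDerivAt_weightedPrimitive {lam h : ℝ → ℝ} (hlam : Continuous lam)
    (hh : ContDiff ℝ 1 h) (m : ℕ) (p : ℝ × ℝ) :
    HasFDerivAt (weightedPrimitive lam h m)
      ((ContinuousLinearMap.fst ℝ ℝ ℝ).smulRight
          (exp (Lam lam p.1) ^ m * h (p.2 * exp (Lam lam p.1) ^ 2))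
        + (ContinuousLinearMap.snd ℝ ℝ ℝ).smulRight (weightedPrimitive lam (deriv h) (m + 2) p))
      p := by
  have hΛ : Continuous (Lam lam) := continuous_iff_continuousAt.2 fun t =>
    (hasDerivAt_Lam hlam t).continuousAt
  have hh' : Continuous (deriv h) := hh.continuous_deriv le_rfl
  have hhc : Continuous h := hh.continuous
  refine hasFDerivAt_primitive_param
    (F := fun s y => exp (Lam lam s) ^ m * h (y * exp (Lam lam s) ^ 2))
    (F' := fun s y => exp (Lam lam s) ^ (m + 2) * deriv h (y * exp (Lam lam s) ^ 2))
    (by simp only [uncurry_def]; fun_prop) (by simp only [uncurry_def]; fun_prop)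
    (fun s y => ?_) 0 p
  refine (((hh.differentiable one_ne_zero _).hasDerivAt.comp y
    (hasDerivAt_mul_const (exp (Lam lam s) ^ 2))).const_mul (exp (Lam lam s) ^ m)).congr_deriv ?_
  ring

/-- `∂ₓᵏ usol lam f g = scaledSolution lam f⁽ᵏ⁾ g⁽ᵏ⁾ k`. -/
noncomputable def scaledSolution (lam F G : ℝ → ℝ) (k : ℕ) (t x : ℝ) : ℝ :=
  exp (-Lam lam t) ^ k *
    (F (x * exp (-Lam lam t)) + weightedPrimitive lam G (2 * k) (t, x * exp (-Lam lam t)))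

theorem usol_eq_scaledSolution (lam f g : ℝ → ℝ) : usol lam f g = scaledSolution lam f g 0 := by
  ext t x
  simp only [usol, scaledSolution, weightedPrimitive, pow_zero, one_mul, mul_zero]
  congr 2 with s
  rw [mul_assoc, ← exp_nat_mul, ← exp_add]
  congr 3
  push_cast
  ring

theorem hasDerivAt_scaledSolution_space {lam F G : ℝ → ℝ} (hlam : Continuous lam)
    (hF : Differentiable ℝ F) (hG : ContDiff ℝ 1 G) (k : ℕ) (t x : ℝ) :
    HasDerivAt (fun y => scaledSolution lam F G k t y)
      (scaledSolution lam (deriv F) (deriv G) (k + 1) t x) x := by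
  set e := exp (-Lam lam t)
  have hline : HasDerivAt (fun y => ((t, y * e) : ℝ × ℝ)) ((0 : ℝ), e) x :=
    (hasDerivAt_const x t).prodMk (hasDerivAt_mul_const e)
  have hW := (hasFDerivAt_weightedPrimitive hlam hG (2 * k) (t, x * e)).comp_hasDerivAt x hline
  have hFe := (hF (x * e)).hasDerivAt.comp x (hasDerivAt_mul_const e)
  refine ((hFe.add hW).const_mul (e ^ k)).congr_deriv ?_
  simp only [add_apply, ContinuousLinearMap.smulRight_apply, ContinuousLinearMap.coe_fst',
    ContinuousLinearMap.coe_snd', smul_eq_mul, zero_mul, zero_add, scaledSolution, mul_add_one, e]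
  ring

theorem hasDerivAt_scaledSolution_time {lam F G : ℝ → ℝ} (hlam : Continuous lam)
    (hF : Differentiable ℝ F) (hG : ContDiff ℝ 1 G) (k : ℕ) (t x : ℝ) :
    HasDerivAt (fun τ => scaledSolution lam F G k τ x)
      (-(k * lam t) * scaledSolution lam F G k t x
        - lam t * x * scaledSolution lam (deriv F) (deriv G) (k + 1) t x
        + exp (Lam lam t) ^ k * G (x * exp (Lam lam t))) t := by
  have hE : HasDerivAt (fun τ => exp (-Lam lam τ)) (exp (-Lam lam t) * -lam t) t :=
    (hasDerivAt_Lam hlam t).neg.exp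
  have hcurve : HasDerivAt (fun τ => ((τ, x * exp (-Lam lam τ)) : ℝ × ℝ))
      ((1 : ℝ), x * (exp (-Lam lam t) * -lam t)) t :=
    (hasDerivAt_id t).prodMk (hE.const_mul x)
  have hW := (hasFDerivAt_weightedPrimitive hlam hG (2 * k)
    (t, x * exp (-Lam lam t))).comp_hasDerivAt t hcurve
  have hFe := (hF _).hasDerivAt.comp t (hE.const_mul x)
  have hunit : exp (-Lam lam t) * exp (Lam lam t) ^ 2 = exp (Lam lam t) := by
    rw [exp_neg]; field_simp
  have harg : x * exp (-Lam lam t) * exp (Lam lam t) ^ 2 = x * exp (Lam lam t) := by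
    rw [mul_assoc, hunit]
  have hpow : exp (-Lam lam t) ^ k * exp (Lam lam t) ^ (2 * k) = exp (Lam lam t) ^ k := by
    rw [pow_mul, ← mul_pow, hunit]
  have hEk : HasDerivAt (fun τ => exp (-Lam lam τ) ^ k)
      (exp (-Lam lam t) ^ k * -(k * lam t)) t := by
    simp_rw [← exp_nat_mul]
    exact ((hasDerivAt_Lam hlam t).neg.const_mul (k : ℝ)).exp.congr_deriv (by simp)
  refine (hEk.mul (hFe.add hW)).congr_deriv ?_
  simp only [mul_neg, Pi.add_apply, comp_apply, neg_mul, harg, add_apply,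
    ContinuousLinearMap.smulRight_apply, ContinuousLinearMap.coe_fst', smul_eq_mul, one_mul,
    ContinuousLinearMap.coe_snd', scaledSolution, mul_add_one]
  linear_combination G (x * exp (Lam lam t)) * hpow

theorem hasDerivAt_scaledSolution_zero_time {lam F G : ℝ → ℝ} (hlam : Continuous lam)
    (hF : Differentiable ℝ F) (hG : ContDiff ℝ 1 G) (t x : ℝ) :
    HasDerivAt (fun τ => scaledSolution lam F G 0 τ x)
      (G (x * exp (Lam lam t)) - lam t * x * scaledSolution lam (deriv F) (deriv G) 1 t x) t :=
  (hasDerivAt_scaledSolution_time hlam hF hG 0 t x).congr_deriv (by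
    simp only [CharP.cast_eq_zero, zero_mul, neg_zero, zero_add, zero_sub, pow_zero, one_mul]
    ring)

theorem hasDerivAt_deriv_scaledSolution_zero_time {lam F G : ℝ → ℝ} (hlam : ContDiff ℝ 1 lam)
    (hF : ContDiff ℝ 2 F) (hG : ContDiff ℝ 2 G) (t x : ℝ) :
    HasDerivAt (deriv fun τ => scaledSolution lam F G 0 τ x)
      ((lam t ^ 2 - deriv lam t) * x * scaledSolution lam (deriv F) (deriv G) 1 t x
        + lam t ^ 2 * x ^ 2 * scaledSolution lam (deriv (deriv F)) (deriv (deriv G)) 2 t x) t := by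
  have hlamc : Continuous lam := hlam.continuous
  have hG₁ : ContDiff ℝ 1 G := hG.of_le one_le_two
  rw [funext fun τ => (hasDerivAt_scaledSolution_zero_time hlamc (hF.differentiable two_ne_zero)
    hG₁ τ x).deriv]
  have hGt := (hG₁.differentiable one_ne_zero _).hasDerivAt.comp t
    ((hasDerivAt_Lam hlamc t).exp.const_mul x)
  have hlamt := (hlam.differentiable one_ne_zero t).hasDerivAt.mul_const x
  have hXt := hasDerivAt_scaledSolution_time hlamc (hF.deriv'.differentiable one_ne_zero)
    hG.deriv' 1 t x
  refine (hGt.sub (hlamt.mul hXt)).congr_deriv ?_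
  simp only [Nat.cast_one, one_mul, neg_mul, Nat.reduceAdd, pow_one]
  ring

theorem explicit_solution_model_problem_general
    (T : ℝ) (lam : ℝ → ℝ) (hlam : ContDiff ℝ 1 lam) (hlam0 : lam 0 = 0)
    (f g : ℝ → ℝ) (hf : ContDiff ℝ 2 f) (hg : ContDiff ℝ 2 g) :
    ∀ t ∈ Set.Icc (0:ℝ) T, ∀ x : ℝ,
      (deriv (deriv (fun τ => usol lam f g τ x)) t
          + deriv lam t * x * deriv (fun y => usol lam f g t y) x
          - lam t ^ 2 * x * deriv (fun y => usol lam f g t y) x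
          - lam t ^ 2 * x ^ 2 * deriv (deriv (fun y => usol lam f g t y)) x = 0)
      ∧ usol lam f g 0 x = f x
      ∧ deriv (fun τ => usol lam f g τ x) 0 = g x := by
  intro t _ x
  have hlamc : Continuous lam := hlam.continuous
  have hux : deriv (scaledSolution lam f g 0 t) = scaledSolution lam (deriv f) (deriv g) 1 t :=
    funext fun y => (hasDerivAt_scaledSolution_space hlamc (hf.differentiable two_ne_zero)
      (hg.of_le one_le_two) 0 t y).deriv
  have huxx := (hasDerivAt_scaledSolution_space hlamc (hf.deriv'.differentiable one_ne_zero)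
    hg.deriv' 1 t x).deriv
  rw [usol_eq_scaledSolution]
  refine ⟨?_, ?_, ?_⟩
  · rw [(hasDerivAt_deriv_scaledSolution_zero_time hlam hf hg t x).deriv, hux, huxx]
    ring
  · simp [scaledSolution, weightedPrimitive, Lam_zero]
  · simp [(hasDerivAt_scaledSolution_zero_time hlamc (hf.differentiable two_ne_zero)
      (hg.of_le one_le_two) 0 x).deriv, hlam0, Lam_zero]

/-- Example 2.9 of the paper: `u` solves
`∂ₜ²u + λ'(t)x∂ₓu − λ(t)²x∂ₓu − λ(t)²x²∂ₓ²u = 0` with `u(0,x) = f(x)`,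
`∂ₜu(0,x) = g(x)`. -/
theorem explicit_solution_model_problem
    (T : ℝ) (hT : 0 < T) (lam : ℝ → ℝ) (hlam : ContDiff ℝ 1 lam) (hlam0 : lam 0 = 0)
    (f g : ℝ → ℝ) (hf : ContDiff ℝ 2 f) (hg : ContDiff ℝ 2 g) :
    ∀ t ∈ Set.Icc (0:ℝ) T, ∀ x : ℝ,
      (deriv (deriv (fun τ => usol lam f g τ x)) t
          + deriv lam t * x * deriv (fun y => usol lam f g t y) x
          - lam t ^ 2 * x * deriv (fun y => usol lam f g t y) x
          - lam t ^ 2 * x ^ 2 * deriv (deriv (fun y => usol lam f g t y)) x = 0)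
      ∧ usol lam f g 0 x = f x
      ∧ deriv (fun τ => usol lam f g τ x) 0 = g x :=
  explicit_solution_model_problem_general T lam hlam hlam0 f g hf hg
end

section
/- Assume the shape function setting, and assume additionally that |λ''(t)| ≤ c·(λ'(t)/λ(t))·λ'(t) for all t ∈ (0,T] (some c > 0) and that Λ(T) ≤ e^{−1}. Then there exists a constant C > 0 such that for all t ∈ (0,T]: |(λ²)'(t)| ≤ C·λ(t)²·(λ(t)/Λ(t))·ln(1/Λ(t)) and |(λ²)''(t)| ≤ C·λ(t)²·((λ(t)/Λ(t))·ln(1/Λ(t)))². -/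
/-- Example 2.9 of the paper: the estimates on `(λ²)' = 2λλ'` and
`(λ²)'' = 2(λ')² + 2λλ''` in terms of `λ²·((λ/Λ)·ln(1/Λ))^k`, `k = 1, 2`. -/
theorem coefficient_estimates_lambda_squared
    (T : ℝ) (hT : 0 < T) (lam lam' lam'' : ℝ → ℝ)
    (hsmooth : ContDiffOn ℝ (⊤ : ℕ∞) lam (Set.Icc 0 T))
    (hderiv : ∀ t ∈ Set.Icc 0 T, HasDerivWithinAt lam (lam' t) (Set.Icc 0 T) t)
    (hderiv2 : ∀ t ∈ Set.Icc 0 T, HasDerivWithinAt lam' (lam'' t) (Set.Icc 0 T) t)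
    (hlam0 : lam 0 = 0) (hlam'0 : lam' 0 = 0)
    (hlampos : ∀ t ∈ Set.Ioc 0 T, 0 < lam t)
    (hlam'pos : ∀ t ∈ Set.Ioc 0 T, 0 < lam' t)
    (c₁ C₁ : ℝ) (hc₁ : 1/2 < c₁) (hC₁0 : 0 < C₁) (hC₁1 : C₁ < 1)
    (hlow : ∀ t ∈ Set.Ioc 0 T, c₁ * (lam t / Lam lam t) ≤ lam' t / lam t)
    (hhigh : ∀ t ∈ Set.Ioc 0 T, lam' t / lam t ≤ C₁ * (lam t / Lam lam t))
    (c : ℝ) (hc : 0 < c)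
    (hlam'' : ∀ t ∈ Set.Ioc 0 T, |lam'' t| ≤ c * (lam' t / lam t) * lam' t)
    (hΛT : Lam lam T ≤ Real.exp (-1)) :
    ∃ C : ℝ, 0 < C ∧ ∀ t ∈ Set.Ioc 0 T,
      |2 * lam t * lam' t| ≤
        C * lam t ^ 2 * (lam t / Lam lam t * Real.log (1 / Lam lam t)) ∧
      |2 * lam' t ^ 2 + 2 * lam t * lam'' t| ≤
        C * lam t ^ 2 * (lam t / Lam lam t * Real.log (1 / Lam lam t)) ^ 2 := by
  have hcont : ContinuousOn lam (Set.Icc 0 T) := hsmooth.continuousOn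
  refine ⟨2 * (1 + c), by positivity, fun t ht => ?_⟩
  have ht0 := ht.1
  have htT := ht.2
  have hlt : 0 < lam t := hlampos t ht
  have hl't : 0 < lam' t := hlam'pos t ht
  -- positivity of Λ(t)
  have hint : IntervalIntegrable lam MeasureTheory.volume 0 t :=
    (hcont.mono (Set.Icc_subset_Icc le_rfl htT)).intervalIntegrable_of_Icc ht0.le
  have hΛpos : 0 < Lam lam t := by
    refine intervalIntegral.intervalIntegral_pos_of_pos_on hint (fun x hx => ?_) ht0
    exact hlampos x ⟨hx.1, hx.2.le.trans htT⟩
  -- Λ(t) ≤ Λ(T)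
  have hintT : IntervalIntegrable lam MeasureTheory.volume t T :=
    (hcont.mono (Set.Icc_subset_Icc ht0.le le_rfl)).intervalIntegrable_of_Icc htT
  have hΛmono : Lam lam t ≤ Lam lam T := by
    have hsplit : Lam lam t + ∫ s in t..T, lam s = Lam lam T :=
      intervalIntegral.integral_add_adjacent_intervals hint hintT
    have hnn : 0 ≤ ∫ s in t..T, lam s := by
      refine intervalIntegral.integral_nonneg htT (fun u hu => ?_)
      rcases eq_or_lt_of_le hu.1 with h | h
      · exact le_of_lt (hlampos u ⟨h ▸ ht0, hu.2⟩)
      · exact le_of_lt (hlampos u ⟨ht0.trans h, hu.2⟩)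
    linarith
  have hΛe : Lam lam t ≤ Real.exp (-1) := hΛmono.trans hΛT
  have hL : 1 ≤ Real.log (1 / Lam lam t) := by
    rw [one_div, Real.log_inv]
    have := Real.log_le_log hΛpos hΛe
    rw [Real.log_exp] at this
    linarith
  -- λ' ≤ λ² / Λ
  have hratio : lam' t / lam t ≤ lam t / Lam lam t := by
    have h1 := hhigh t ⟨ht0, htT⟩
    have h2 : C₁ * (lam t / Lam lam t) ≤ 1 * (lam t / Lam lam t) := by
      apply mul_le_mul_of_nonneg_right hC₁1.le
      positivity
    linarith
  have hkey : lam' t ≤ lam t ^ 2 / Lam lam t := by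
    rw [div_le_div_iff₀ hlt hΛpos] at hratio
    rw [le_div_iff₀ hΛpos]
    nlinarith
  have hLam2 : 0 < lam t ^ 2 / Lam lam t := by positivity
  constructor
  · rw [abs_of_pos (by positivity)]
    have h1 : 2 * lam t * lam' t ≤ 2 * lam t * (lam t ^ 2 / Lam lam t) := by
      apply mul_le_mul_of_nonneg_left hkey (by positivity)
    calc 2 * lam t * lam' t ≤ 2 * lam t * (lam t ^ 2 / Lam lam t) := h1
      _ = 2 * lam t ^ 2 * (lam t / Lam lam t * 1) := by ring
      _ ≤ 2 * (1 + c) * lam t ^ 2 * (lam t / Lam lam t * Real.log (1 / Lam lam t)) := by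
          apply mul_le_mul
          · nlinarith [sq_nonneg (lam t)]
          · exact mul_le_mul_of_nonneg_left hL (by positivity)
          · positivity
          · positivity
  · have habs : |2 * lam' t ^ 2 + 2 * lam t * lam'' t| ≤ 2 * (1 + c) * lam' t ^ 2 := by
      have h2 := hlam'' t ⟨ht0, htT⟩
      have hl : lam t * (c * (lam' t / lam t) * lam' t) = c * lam' t ^ 2 := by
        field_simp
      calc |2 * lam' t ^ 2 + 2 * lam t * lam'' t|
          ≤ |2 * lam' t ^ 2| + |2 * lam t * lam'' t| := abs_add_le _ _
        _ = 2 * lam' t ^ 2 + 2 * lam t * |lam'' t| := by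
            rw [abs_of_nonneg (by positivity), abs_mul, abs_of_nonneg (by positivity)]
        _ ≤ 2 * lam' t ^ 2 + 2 * lam t * (c * (lam' t / lam t) * lam' t) := by
            nlinarith
        _ = 2 * (1 + c) * lam' t ^ 2 := by
            have : lam t * (c * (lam' t / lam t) * lam' t) = c * lam' t ^ 2 := hl
            nlinarith
    refine habs.trans ?_
    have hsq : lam' t ^ 2 ≤ (lam t ^ 2 / Lam lam t) ^ 2 := by
      apply pow_le_pow_left₀ hl't.le hkey
    calc 2 * (1 + c) * lam' t ^ 2 ≤ 2 * (1 + c) * (lam t ^ 2 / Lam lam t) ^ 2 := by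
          apply mul_le_mul_of_nonneg_left hsq (by positivity)
      _ = 2 * (1 + c) * lam t ^ 2 * (lam t / Lam lam t * 1) ^ 2 := by ring
      _ ≤ 2 * (1 + c) * lam t ^ 2 * (lam t / Lam lam t * Real.log (1 / Lam lam t)) ^ 2 := by
          apply mul_le_mul_of_nonneg_left _ (by positivity)
          apply pow_le_pow_left₀ (by positivity)
          exact mul_le_mul_of_nonneg_left hL (by positivity)
end

section
/- Let T > 0 and let λ : (0,T] → (0,∞) satisfy λ(t)² ≤ K·Λ(t) and λ(t) ≤ L for all t ∈ (0,T], where Λ(t) := ∫₀ᵗ λ(s) ds and K, L > 0. Then there exists a constant C = C(K,L) > 0 such that for every N ≥ 1, every t ∈ (0,T], and every real r ≥ e with Λ(t)·r ≥ N·ln r, one has (λ(t)/Λ(t))·ln(1/Λ(t)) ≤ C·r. -/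
/-!
Since `λ ≤ √(KΛ)` and `log (1/Λ) ≤ 2/√Λ`, the left-hand side is at most `2√K/Λ`; on the
hyperbolic zone `Λ r ≥ N log r ≥ 1`, so `1/Λ ≤ r`.
-/

open Real

theorem log_le_two_mul_sqrt {x : ℝ} (hx : 0 ≤ x) : log x ≤ 2 * √x := by
  have h := log_le_rpow_div hx (by norm_num : (0 : ℝ) < 1 / 2)
  rw [← sqrt_eq_rpow] at h
  linarith

theorem div_mul_log_inv_le_of_sq_le_mul {a b K : ℝ} (ha : 0 ≤ a) (hb : 0 < b)
    (h : a ^ 2 ≤ K * b) : a / b * log (1 / b) ≤ 2 * √K / b := by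
  have ha' : a ≤ √K * √b := by
    rw [← sqrt_mul' K hb.le]
    exact le_sqrt_of_sq_le h
  calc a / b * log (1 / b) ≤ a / b * (2 * √(1 / b)) := by
        gcongr
        exact log_le_two_mul_sqrt (by positivity)
    _ = 2 * a / (b * √b) := by
        rw [sqrt_div' 1 hb.le, sqrt_one]
        field_simp
    _ ≤ 2 * (√K * √b) / (b * √b) := by gcongr
    _ = 2 * √K / b := by field_simp

theorem one_le_mul_of_mul_log_le {N b r : ℝ} (hN : 1 ≤ N) (hr : exp 1 ≤ r)
    (h : N * log r ≤ b * r) : 1 ≤ b * r := by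
  have hlog : 1 ≤ log r := (le_log_iff_exp_le (by linarith [exp_pos 1])).mpr hr
  nlinarith

theorem hyperbolic_zone_key_inequality_general
    (T : ℝ) (lam : ℝ → ℝ) (K : ℝ) (hK : 0 < K)
    (hpos : ∀ t ∈ Set.Ioc 0 T, 0 < lam t)
    (hKb : ∀ t ∈ Set.Ioc 0 T, lam t ^ 2 ≤ K * Lam lam t) :
    ∃ C : ℝ, 0 < C ∧ ∀ N : ℝ, 1 ≤ N → ∀ t ∈ Set.Ioc 0 T, ∀ r : ℝ, Real.exp 1 ≤ r →
      N * Real.log r ≤ Lam lam t * r →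
      lam t / Lam lam t * Real.log (1 / Lam lam t) ≤ C * r := by
  refine ⟨2 * √K, by positivity, fun N hN t ht r hr hzone => ?_⟩
  have hlam := hpos t ht
  have hΛ : 0 < Lam lam t :=
    pos_of_mul_pos_right ((pow_pos hlam 2).trans_le (hKb t ht)) hK.le
  have hΛr : 1 ≤ Lam lam t * r := one_le_mul_of_mul_log_le hN hr hzone
  calc lam t / Lam lam t * log (1 / Lam lam t) ≤ 2 * √K / Lam lam t :=
        div_mul_log_inv_le_of_sq_le_mul hlam.le hΛ (hKb t ht)
    _ ≤ 2 * √K * r := by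
        rw [div_le_iff₀ hΛ, mul_assoc]
        exact le_mul_of_one_le_right (by positivity) (by linarith)

/-- The key pointwise inequality of Proposition 2.6 (2), (5): on the hyperbolic zone
`Λ(t)·r ≥ N·ln r` (with `r` abstracting `⟨x⟩⟨ξ⟩`), one has
`(λ(t)/Λ(t))·ln(1/Λ(t)) ≤ C·r` with `C = C(K,L)`. -/
theorem hyperbolic_zone_key_inequality
    (T : ℝ) (hT : 0 < T) (lam : ℝ → ℝ) (K L : ℝ) (hK : 0 < K) (hL : 0 < L)
    (hpos : ∀ t ∈ Set.Ioc 0 T, 0 < lam t)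
    (hKb : ∀ t ∈ Set.Ioc 0 T, lam t ^ 2 ≤ K * Lam lam t)
    (hLb : ∀ t ∈ Set.Ioc 0 T, lam t ≤ L) :
    ∃ C : ℝ, 0 < C ∧ ∀ N : ℝ, 1 ≤ N → ∀ t ∈ Set.Ioc 0 T, ∀ r : ℝ, Real.exp 1 ≤ r →
      N * Real.log r ≤ Lam lam t * r →
      lam t / Lam lam t * Real.log (1 / Lam lam t) ≤ C * r :=
  hyperbolic_zone_key_inequality_general T lam K hK hpos hKb
end

section
/- Let T > 0 and let λ : (0,T] → (0,∞) satisfy λ(t)² ≤ K·Λ(t), λ(t) ≤ L, and Λ(T) ≤ e^{−1}, where Λ(t) := ∫₀ᵗ λ(s) ds. Let m, μ ∈ ℝ, κ ≥ 0, ℓ ≥ 0, l ∈ ℕ, and N ≥ 1. Then there exists a constant C > 0 such that for all t ∈ (0,T] and all x, ξ ∈ ℝ^d with Λ(t)·⟨x⟩⟨ξ⟩ ≥ N·ln(⟨x⟩⟨ξ⟩): ⟨x⟩^m·⟨ξ⟩^μ·λ(t)^κ·((λ(t)/Λ(t))·ln(1/Λ(t)))^{ℓ+l} ≤ C·⟨x⟩^{max(0,m+ℓ)+l}·⟨ξ⟩^{max(0,μ+ℓ)+l}.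 -/
/-- The weight `⟨y⟩ = (e + |y|²)^{1/2}`. -/
noncomputable def jw {d : ℕ} (y : EuclideanSpace ℝ (Fin d)) : ℝ :=
  Real.sqrt (Real.exp 1 + ‖y‖ ^ 2)

open Real Set MeasureTheory

lemma sqrt_exp_one_le_jw {d : ℕ} (y : EuclideanSpace ℝ (Fin d)) : √(exp 1) ≤ jw y :=
  sqrt_le_sqrt (le_add_of_nonneg_right (sq_nonneg ‖y‖))

lemma one_le_jw {d : ℕ} (y : EuclideanSpace ℝ (Fin d)) : 1 ≤ jw y :=
  calc (1 : ℝ) = √1 := sqrt_one.symm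
    _ ≤ √(exp 1) := sqrt_le_sqrt (one_le_exp zero_le_one)
    _ ≤ jw y := sqrt_exp_one_le_jw y

lemma one_le_log_jw_mul_jw {d : ℕ} (x ξ : EuclideanSpace ℝ (Fin d)) :
    1 ≤ log (jw x * jw ξ) := by
  have hprod : exp 1 ≤ jw x * jw ξ :=
    calc exp 1 = √(exp 1) * √(exp 1) := (mul_self_sqrt (exp_pos 1).le).symm
      _ ≤ jw x * jw ξ :=
        mul_le_mul (sqrt_exp_one_le_jw x) (sqrt_exp_one_le_jw ξ) (sqrt_nonneg _)
          (zero_le_one.trans (one_le_jw x))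
  exact (le_log_iff_exp_le (by linarith [exp_pos 1])).2 hprod

lemma intervalIntegrable_of_sq_le_mul_Lam {lam : ℝ → ℝ} {K t : ℝ} (hlam : lam t ≠ 0)
    (h : lam t ^ 2 ≤ K * Lam lam t) : IntervalIntegrable lam volume 0 t := by
  refine intervalIntegral.intervalIntegrable_of_integral_ne_zero fun h0 => hlam ?_
  rw [Lam, h0, mul_zero] at h
  exact pow_eq_zero_iff two_ne_zero |>.1 (le_antisymm h (sq_nonneg _))

lemma Lam_pos {lam : ℝ → ℝ} {K t : ℝ} (hK : 0 < K) (hlam : 0 < lam t)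
    (h : lam t ^ 2 ≤ K * Lam lam t) : 0 < Lam lam t :=
  pos_of_mul_pos_right ((pow_pos hlam 2).trans_le h) hK.le

lemma Lam_mono {lam : ℝ → ℝ} {s t : ℝ} (hs : 0 ≤ s) (hst : s ≤ t)
    (hnn : ∀ u ∈ Ioc 0 t, 0 ≤ lam u) (hint : IntervalIntegrable lam volume 0 t) :
    Lam lam s ≤ Lam lam t :=
  intervalIntegral.integral_mono_interval le_rfl hs hst
    (ae_restrict_of_forall_mem measurableSet_Ioc hnn) hint

lemma log_le_two_mul_sqrt_s7 {w : ℝ} (hw : 0 < w) : log w ≤ 2 * √w := by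
  have := log_le_sub_one_of_pos (sqrt_pos.2 hw)
  rw [log_sqrt hw.le] at this
  linarith

lemma div_mul_log_one_div_le {lam Λ K w : ℝ} (hK : 0 < K) (hΛ : 0 < Λ) (hΛ1 : Λ ≤ 1)
    (hlam : lam ^ 2 ≤ K * Λ) (hΛw : 1 ≤ Λ * w) :
    lam / Λ * log (1 / Λ) ≤ 2 * √K * w := by
  have hw : 0 < w := pos_of_mul_pos_right (zero_lt_one.trans_le hΛw) hΛ.le
  have hinv : 1 / Λ ≤ w := (div_le_iff₀ hΛ).2 (by linarith)
  have hratio : lam / Λ ≤ √(K * w) := by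
    refine (le_abs_self _).trans (abs_le_sqrt ?_)
    calc (lam / Λ) ^ 2 = lam ^ 2 / Λ * (1 / Λ) := by ring
      _ ≤ K * w := by
        gcongr
        · exact (div_le_iff₀ hΛ).2 hlam
  have hlog : log (1 / Λ) ≤ 2 * √w :=
    (log_le_log (by positivity) hinv).trans (log_le_two_mul_sqrt_s7 hw)
  calc lam / Λ * log (1 / Λ) ≤ √(K * w) * (2 * √w) :=
        mul_le_mul hratio hlog (log_nonneg (one_le_one_div hΛ hΛ1)) (sqrt_nonneg _)
    _ = 2 * √K * w := by rw [sqrt_mul hK.le, mul_mul_mul_comm, mul_self_sqrt hw.le]; ring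

lemma rpow_mul_rpow_le_rpow {A a b c : ℝ} (hA : 1 ≤ A) (h : a + b ≤ c) :
    A ^ a * A ^ b ≤ A ^ c := by
  rw [← rpow_add (zero_lt_one.trans_le hA)]
  exact rpow_le_rpow_of_exponent_le hA h

lemma rpow_mul_rpow_mul_rpow_mul_rpow_le {A B lam L X c m μ κ e p q : ℝ} (hA : 1 ≤ A)
    (hB : 1 ≤ B) (hlam0 : 0 ≤ lam) (hlam : lam ≤ L) (hκ : 0 ≤ κ) (hX0 : 0 ≤ X) (hc : 0 ≤ c)
    (hX : X ≤ c * (A * B)) (he : 0 ≤ e) (hp : m + e ≤ p) (hq : μ + e ≤ q) :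
    A ^ m * B ^ μ * lam ^ κ * X ^ e ≤ L ^ κ * c ^ e * A ^ p * B ^ q := by
  have hA0 : 0 ≤ A := zero_le_one.trans hA
  have hB0 : 0 ≤ B := zero_le_one.trans hB
  have hXe : X ^ e ≤ c ^ e * (A ^ e * B ^ e) := by
    rw [← mul_rpow hA0 hB0, ← mul_rpow hc (mul_nonneg hA0 hB0)]
    exact rpow_le_rpow hX0 hX he
  have hL0 : 0 ≤ L := hlam0.trans hlam
  calc A ^ m * B ^ μ * lam ^ κ * X ^ e
      ≤ A ^ m * B ^ μ * L ^ κ * (c ^ e * (A ^ e * B ^ e)) := by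
        gcongr
    _ = L ^ κ * c ^ e * (A ^ m * A ^ e) * (B ^ μ * B ^ e) := by ring
    _ ≤ L ^ κ * c ^ e * A ^ p * B ^ q := by
        gcongr
        · exact rpow_mul_rpow_le_rpow hA hp
        · exact rpow_mul_rpow_le_rpow hB hq

/-- Proposition 2.6 (5) of the paper: on the hyperbolic zone, the defining bound of the
class `SG_H{m,μ,κ,ℓ}(N)` applied to `∂ₜˡ a` is dominated by the weight
`⟨x⟩^{max(0,m+ℓ)+l}·⟨ξ⟩^{max(0,μ+ℓ)+l}`. -/
theorem sg_hierarchy_class_embedding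
    (d : ℕ) (T : ℝ) (hT : 0 < T) (lam : ℝ → ℝ) (K L : ℝ) (hK : 0 < K) (hL : 0 < L)
    (hpos : ∀ t ∈ Set.Ioc 0 T, 0 < lam t)
    (hKb : ∀ t ∈ Set.Ioc 0 T, lam t ^ 2 ≤ K * Lam lam t)
    (hLb : ∀ t ∈ Set.Ioc 0 T, lam t ≤ L)
    (hΛT : Lam lam T ≤ Real.exp (-1))
    (m μ κ ℓ : ℝ) (hκ : 0 ≤ κ) (hℓ : 0 ≤ ℓ) (l : ℕ) (N : ℝ) (hN : 1 ≤ N) :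
    ∃ C : ℝ, 0 < C ∧ ∀ t ∈ Set.Ioc 0 T, ∀ x ξ : EuclideanSpace ℝ (Fin d),
      N * Real.log (jw x * jw ξ) ≤ Lam lam t * (jw x * jw ξ) →
      jw x ^ m * jw ξ ^ μ * lam t ^ κ *
          (lam t / Lam lam t * Real.log (1 / Lam lam t)) ^ (ℓ + (l : ℝ)) ≤
        C * jw x ^ (max 0 (m + ℓ) + (l : ℝ)) * jw ξ ^ (max 0 (μ + ℓ) + (l : ℝ)) := by
  have hint : ∀ t ∈ Ioc 0 T, IntervalIntegrable lam volume 0 t := fun t ht =>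
    intervalIntegrable_of_sq_le_mul_Lam (hpos t ht).ne' (hKb t ht)
  refine ⟨L ^ κ * (2 * √K) ^ (ℓ + (l : ℝ)), by positivity, fun t ht x ξ hzone => ?_⟩
  have hΛ : 0 < Lam lam t := Lam_pos hK (hpos t ht) (hKb t ht)
  have hΛ1 : Lam lam t ≤ 1 :=
    calc Lam lam t ≤ Lam lam T :=
          Lam_mono ht.1.le ht.2 (fun u hu => (hpos u hu).le) (hint T ⟨hT, le_rfl⟩)
      _ ≤ exp (-1) := hΛT
      _ ≤ 1 := exp_le_one_iff.2 (by norm_num)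
  have hlog := one_le_log_jw_mul_jw x ξ
  have hΛw : 1 ≤ Lam lam t * (jw x * jw ξ) :=
    calc 1 ≤ log (jw x * jw ξ) := hlog
      _ ≤ N * log (jw x * jw ξ) := le_mul_of_one_le_left (zero_le_one.trans hlog) hN
      _ ≤ Lam lam t * (jw x * jw ξ) := hzone
  refine rpow_mul_rpow_mul_rpow_mul_rpow_le (one_le_jw x) (one_le_jw ξ) (hpos t ht).le
    (hLb t ht) hκ ?_ (by positivity) (div_mul_log_one_div_le hK hΛ hΛ1 (hKb t ht) hΛw)
    (by positivity) (by linarith [le_max_right 0 (m + ℓ)]) (by linarith [le_max_right 0 (μ + ℓ)])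
  exact mul_nonneg (div_nonneg (hpos t ht).le hΛ.le) (log_nonneg (one_le_one_div hΛ hΛ1))
end

section
/- Assume the shape function setting with λ(t)² ≤ K·Λ(t) for all t ∈ (0,T]. Fix N ≥ 1 and a function χ : ℝ → ℝ with 0 ≤ χ ≤ 1, χ(η) = 1 for |η| ≤ 1, and χ(η) = 0 for |η| ≥ 2, and define ρ(t,x,ξ) := (1 + (λ(t)²/Λ(t))·⟨x⟩⟨ξ⟩·ln(⟨x⟩⟨ξ⟩))^{1/2} and h(t,x,ξ) := ρ(t,x,ξ)·χ(Λ(t)⟨x⟩⟨ξ⟩/(N·ln(⟨x⟩⟨ξ⟩))) + λ(t)·⟨x⟩⟨ξ⟩·(1 − χ(Λ(t)⟨x⟩⟨ξ⟩/(N·ln(⟨x⟩⟨ξ⟩)))). Then there exist constants c, C > 0 such that c·max{1, λ(t)·⟨x⟩⟨ξ⟩} ≤ h(t,x,ξ) ≤ C·⟨x⟩⟨ξ⟩ for all t ∈ (0,T] and all x, ξ ∈ ℝ^d. -/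
/-- The symbol `ρ(t,x,ξ) = (1 + (λ(t)²/Λ(t))·⟨x⟩⟨ξ⟩·ln(⟨x⟩⟨ξ⟩))^{1/2}`. -/
noncomputable def rho (lam : ℝ → ℝ) {d : ℕ} (t : ℝ)
    (x ξ : EuclideanSpace ℝ (Fin d)) : ℝ :=
  Real.sqrt (1 + lam t ^ 2 / Lam lam t * (jw x * jw ξ) * Real.log (jw x * jw ξ))

/-- The regularized symbol
`h = ρ·χ(Λ⟨x⟩⟨ξ⟩/(N ln(⟨x⟩⟨ξ⟩))) + λ⟨x⟩⟨ξ⟩·(1 − χ(Λ⟨x⟩⟨ξ⟩/(N ln(⟨x⟩⟨ξ⟩))))`. -/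
noncomputable def hsym (lam : ℝ → ℝ) (N : ℝ) (χ : ℝ → ℝ) {d : ℕ} (t : ℝ)
    (x ξ : EuclideanSpace ℝ (Fin d)) : ℝ :=
  rho lam t x ξ * χ (Lam lam t * (jw x * jw ξ) / (N * Real.log (jw x * jw ξ))) +
    lam t * (jw x * jw ξ) *
      (1 - χ (Lam lam t * (jw x * jw ξ) / (N * Real.log (jw x * jw ξ))))


open Set MeasureTheory intervalIntegral in
private lemma Lam_pos' {T : ℝ} {lam : ℝ → ℝ}
    (hcont : ContinuousOn lam (Set.Icc 0 T))
    (hpos : ∀ t ∈ Set.Ioc 0 T, 0 < lam t) :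
    ∀ t ∈ Set.Ioc 0 T, 0 < Lam lam t := by
  intro t ht
  have hsub : Set.uIcc (0:ℝ) t ⊆ Set.Icc 0 T := by
    rw [Set.uIcc_of_le ht.1.le]; exact Set.Icc_subset_Icc le_rfl ht.2
  have hint : IntervalIntegrable lam volume 0 t := (hcont.mono hsub).intervalIntegrable
  exact intervalIntegral.intervalIntegral_pos_of_pos_on hint
    (fun x hx => hpos x ⟨hx.1, hx.2.le.trans ht.2⟩) ht.1

open Set MeasureTheory intervalIntegral in
private lemma Lam_cont' {T : ℝ} {lam : ℝ → ℝ} (hT : 0 < T)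
    (hcont : ContinuousOn lam (Set.Icc 0 T)) :
    ContinuousOn (Lam lam) (Set.Icc 0 T) := by
  have h : Set.uIcc (0:ℝ) T = Set.Icc 0 T := Set.uIcc_of_le hT.le
  have hint : IntegrableOn lam (Set.uIcc 0 T) volume := by
    rw [h]; exact hcont.integrableOn_Icc
  have := intervalIntegral.continuousOn_primitive_interval hint
  rwa [h] at this

open Set MeasureTheory intervalIntegral in
private lemma Lam_hasDerivAt' {T : ℝ} {lam : ℝ → ℝ}
    (hcont : ContinuousOn lam (Set.Icc 0 T)) {t : ℝ} (ht : t ∈ Set.Ioo 0 T) :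
    HasDerivAt (Lam lam) (lam t) t := by
  have hsub : Set.uIcc (0:ℝ) t ⊆ Set.Icc 0 T := by
    rw [Set.uIcc_of_le ht.1.le]; exact Set.Icc_subset_Icc le_rfl ht.2.le
  have hint : IntervalIntegrable lam volume 0 t := (hcont.mono hsub).intervalIntegrable
  have hmeas : StronglyMeasurableAtFilter lam (nhds t) volume :=
    (hcont.mono Set.Ioo_subset_Icc_self).stronglyMeasurableAtFilter isOpen_Ioo t ht
  have hct : ContinuousAt lam t := hcont.continuousAt (Icc_mem_nhds ht.1 ht.2)
  exact intervalIntegral.integral_hasDerivAt_right hint hmeas hct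

open Set in
private lemma lam_rpow_lower' {T : ℝ} {lam lam' : ℝ → ℝ} {C₁ : ℝ} (hT : 0 < T)
    (hcont : ContinuousOn lam (Set.Icc 0 T))
    (hderiv : ∀ t ∈ Set.Icc 0 T, HasDerivWithinAt lam (lam' t) (Set.Icc 0 T) t)
    (hlampos : ∀ t ∈ Set.Ioc 0 T, 0 < lam t)
    (hhigh : ∀ t ∈ Set.Ioc 0 T, lam' t / lam t ≤ C₁ * (lam t / Lam lam t)) :
    ∀ t ∈ Set.Ioc 0 T, lam T * Lam lam t ^ C₁ ≤ lam t * Lam lam T ^ C₁ := by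
  have hΛpos := Lam_pos' hcont hlampos
  intro t ht
  rcases eq_or_lt_of_le ht.2 with rfl | hlt
  · exact le_rfl
  · set G : ℝ → ℝ := fun x => Real.log (lam x) - C₁ * Real.log (Lam lam x) with hGdef
    have hsub : Set.Icc t T ⊆ Set.Icc 0 T := Set.Icc_subset_Icc ht.1.le le_rfl
    have hmemIoc : ∀ x ∈ Set.Icc t T, x ∈ Set.Ioc 0 T :=
      fun x hx => ⟨ht.1.trans_le hx.1, hx.2⟩
    have hG : ∀ x ∈ Set.Ioo t T,
        HasDerivAt G (lam' x / lam x - C₁ * (lam x / Lam lam x)) x := by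
      intro x hx
      have hx' : x ∈ Set.Ioo 0 T := ⟨ht.1.trans hx.1, hx.2⟩
      have hd1 : HasDerivAt lam (lam' x) x :=
        (hderiv x ⟨hx'.1.le, hx'.2.le⟩).hasDerivAt (Icc_mem_nhds hx'.1 hx'.2)
      have hd2 := Lam_hasDerivAt' hcont hx'
      have hlmx : lam x ≠ 0 := (hlampos x ⟨hx'.1, hx'.2.le⟩).ne'
      have hΛx : Lam lam x ≠ 0 := (hΛpos x ⟨hx'.1, hx'.2.le⟩).ne'
      exact (hd1.log hlmx).sub (HasDerivAt.const_mul C₁ (hd2.log hΛx))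
    have hA : AntitoneOn G (Set.Icc t T) := by
      apply antitoneOn_of_deriv_nonpos (convex_Icc t T)
      · refine ContinuousOn.sub ?_ (continuousOn_const.mul ?_)
        · exact (hcont.mono hsub).log fun x hx => (hlampos x (hmemIoc x hx)).ne'
        · exact ((Lam_cont' hT hcont).mono hsub).log fun x hx =>
            (hΛpos x (hmemIoc x hx)).ne'
      · rw [interior_Icc]
        exact fun x hx => (hG x hx).differentiableAt.differentiableWithinAt
      · rw [interior_Icc]
        intro x hx
        rw [(hG x hx).deriv]
        have := hhigh x (hmemIoc x ⟨hx.1.le, hx.2.le⟩)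
        linarith
    have hGT : G T ≤ G t := hA ⟨le_rfl, hlt.le⟩ ⟨hlt.le, le_rfl⟩ hlt.le
    have hlmt := hlampos t ht
    have hlmT := hlampos T ⟨hT, le_rfl⟩
    have hΛt := hΛpos t ht
    have hΛT := hΛpos T ⟨hT, le_rfl⟩
    have key : Real.log (lam T) + C₁ * Real.log (Lam lam t) ≤
        Real.log (lam t) + C₁ * Real.log (Lam lam T) := by
      simp only [hGdef] at hGT; linarith
    have h2 := Real.exp_le_exp.mpr key
    rw [Real.exp_add, Real.exp_add, Real.exp_log hlmT, Real.exp_log hlmt] at h2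
    rw [Real.rpow_def_of_pos hΛt, Real.rpow_def_of_pos hΛT,
      mul_comm (Real.log (Lam lam t)) C₁, mul_comm (Real.log (Lam lam T)) C₁]
    exact h2

private lemma e_le_jw_mul {d : ℕ} (x ξ : EuclideanSpace ℝ (Fin d)) :
    Real.exp 1 ≤ jw x * jw ξ := by
  have h1 : Real.sqrt (Real.exp 1) ≤ jw x :=
    Real.sqrt_le_sqrt (le_add_of_nonneg_right (by positivity))
  have h2 : Real.sqrt (Real.exp 1) ≤ jw ξ :=
    Real.sqrt_le_sqrt (le_add_of_nonneg_right (by positivity))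
  calc Real.exp 1 = Real.sqrt (Real.exp 1) * Real.sqrt (Real.exp 1) :=
        (Real.mul_self_sqrt (Real.exp_pos 1).le).symm
    _ ≤ jw x * jw ξ :=
        mul_le_mul h1 h2 (Real.sqrt_nonneg _) ((Real.sqrt_nonneg _).trans h1)

private lemma aux_NL {N L : ℝ} (hN : 1 ≤ N) (hL : 1 ≤ L) : 1 ≤ N * L := by nlinarith

private lemma aux_q_up {K w L q : ℝ} (hK : 0 < K) (hw1 : 1 < w) (hL0 : 0 < L)
    (hlogw : L ≤ w) (hq : q ≤ K * w * L) : 1 + q ≤ (1 + K) * w ^ 2 := by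
  nlinarith [mul_le_mul_of_nonneg_left hlogw (by positivity : (0:ℝ) ≤ K * w)]

private lemma aux_step {l w L Lt N : ℝ} (hcase : Lt * w ≤ 2 * (N * L))
    (h0 : (0:ℝ) ≤ l ^ 2 * w) : l ^ 2 * w ^ 2 * Lt ≤ 2 * N * (l ^ 2 * w * L) := by
  nlinarith [mul_le_mul_of_nonneg_left hcase h0]

private lemma aux_step2 {l w N q : ℝ} (hN : 1 ≤ N) (hq0 : 0 ≤ q)
    (h : l ^ 2 * w ^ 2 ≤ 2 * N * q) : l ^ 2 * w ^ 2 ≤ 2 * N * (1 + q) := by nlinarith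

private lemma aux_one_le {P w : ℝ} (hw1 : 1 < w) (h : (1:ℝ) ≤ P) : 1 ≤ P * w := by
  nlinarith

private lemma aux_one_le' {P w Lt : ℝ} (hw0 : 0 < w) (h : Lt ≤ P) (h1 : 1 ≤ Lt * w) :
    1 ≤ P * w := by nlinarith

private lemma aux_a_le {a P w l : ℝ} (ha : 0 < a) (h1 : 1 ≤ P * w)
    (h2 : a * P * w ≤ l) : a ≤ l := by nlinarith

private lemma aux_add_up {r s w m : ℝ} (h : r ≤ s * w) (hm : 0 ≤ m) (hw : 0 < w) :
    r ≤ (s + m) * w := by nlinarith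

private lemma aux_mul_up {l s m w : ℝ} (h : l ≤ m) (hs : 0 ≤ s) (hw : 0 < w) :
    l * w ≤ (s + m) * w := by nlinarith

private lemma aux_convex_up {r l Cw v : ℝ} (h1 : 0 ≤ v) (h2 : v ≤ 1)
    (h3 : r ≤ Cw) (h4 : l ≤ Cw) : r * v + l * (1 - v) ≤ Cw := by nlinarith

private lemma aux_convex_low {m r l v : ℝ} (h1 : 0 ≤ v) (h2 : v ≤ 1)
    (h3 : m ≤ r) (h4 : m ≤ l) : m ≤ r * v + l * (1 - v) := by nlinarith

private lemma aux_cmul {c si l r : ℝ} (h : si * l ≤ r) (hc : c ≤ si) (hl : 0 ≤ l) :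
    c * l ≤ r := by nlinarith

private lemma aux_cmul' {c l : ℝ} (hc : c ≤ 1) (hl : 0 ≤ l) : c * l ≤ l := by nlinarith

set_option maxHeartbeats 1000000 in
/-- Lemma 4.2 of the paper: the two-sided hypoellipticity bound
`c·max{1, λ(t)⟨x⟩⟨ξ⟩} ≤ h(t,x,ξ) ≤ C·⟨x⟩⟨ξ⟩`. -/
theorem hsym_two_sided_bound
    (d : ℕ) (T : ℝ) (hT : 0 < T) (lam lam' : ℝ → ℝ)
    (hsmooth : ContDiffOn ℝ (⊤ : ℕ∞) lam (Set.Icc 0 T))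
    (hderiv : ∀ t ∈ Set.Icc 0 T, HasDerivWithinAt lam (lam' t) (Set.Icc 0 T) t)
    (hlam0 : lam 0 = 0) (hlam'0 : lam' 0 = 0)
    (hlampos : ∀ t ∈ Set.Ioc 0 T, 0 < lam t)
    (hlam'pos : ∀ t ∈ Set.Ioc 0 T, 0 < lam' t)
    (c₁ C₁ : ℝ) (hc₁ : 1/2 < c₁) (hC₁0 : 0 < C₁) (hC₁1 : C₁ < 1)
    (hlow : ∀ t ∈ Set.Ioc 0 T, c₁ * (lam t / Lam lam t) ≤ lam' t / lam t)
    (hhigh : ∀ t ∈ Set.Ioc 0 T, lam' t / lam t ≤ C₁ * (lam t / Lam lam t))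
    (K : ℝ) (hK : 0 < K)
    (hKb : ∀ t ∈ Set.Ioc 0 T, lam t ^ 2 ≤ K * Lam lam t)
    (N : ℝ) (hN : 1 ≤ N)
    (χ : ℝ → ℝ) (hχ01 : ∀ η : ℝ, 0 ≤ χ η ∧ χ η ≤ 1)
    (hχ1 : ∀ η : ℝ, |η| ≤ 1 → χ η = 1)
    (hχ0 : ∀ η : ℝ, 2 ≤ |η| → χ η = 0) :
    ∃ c C : ℝ, 0 < c ∧ 0 < C ∧
      ∀ t ∈ Set.Ioc 0 T, ∀ x ξ : EuclideanSpace ℝ (Fin d),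
        c * max 1 (lam t * (jw x * jw ξ)) ≤ hsym lam N χ t x ξ ∧
        hsym lam N χ t x ξ ≤ C * (jw x * jw ξ) := by
  have hcont : ContinuousOn lam (Set.Icc 0 T) := hsmooth.continuousOn
  have hΛpos := Lam_pos' hcont hlampos
  obtain ⟨M, hM⟩ := IsCompact.exists_bound_of_continuousOn isCompact_Icc hcont
  have hlmT : 0 < lam T := hlampos T ⟨hT, le_rfl⟩
  have hΛT : 0 < Lam lam T := hΛpos T ⟨hT, le_rfl⟩
  have hkey := lam_rpow_lower' hT hcont hderiv hlampos hhigh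
  obtain ⟨lT, hlT⟩ : ∃ v, v = lam T := ⟨_, rfl⟩
  obtain ⟨LT, hLT⟩ : ∃ v, v = Lam lam T := ⟨_, rfl⟩
  rw [← hlT] at hlmT
  rw [← hLT] at hΛT
  have hLTC : 0 < LT ^ C₁ := Real.rpow_pos_of_pos hΛT _
  set a : ℝ := lT / LT ^ C₁ with ha_def
  have ha : 0 < a := div_pos hlmT hLTC
  have hsN : 0 < Real.sqrt (2 * N) := Real.sqrt_pos.mpr (by linarith)
  set c : ℝ := min (min 1 a) (Real.sqrt (2 * N))⁻¹ with hc_def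
  have hc : 0 < c := lt_min (lt_min one_pos ha) (by positivity)
  set C : ℝ := Real.sqrt (1 + K) + (|M| + 1) with hC_def
  have hCpos : 0 < C := by positivity
  refine ⟨c, C, hc, hCpos, ?_⟩
  intro t ht x ξ
  have hwE : Real.exp 1 ≤ jw x * jw ξ := e_le_jw_mul x ξ
  have hΛ : 0 < Lam lam t := hΛpos t ht
  have hlm : 0 < lam t := hlampos t ht
  have hk : lT * Lam lam t ^ C₁ ≤ lam t * LT ^ C₁ := by
    rw [hlT, hLT]; exact hkey t ht
  have hKb' : lam t ^ 2 ≤ K * Lam lam t := hKb t ht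
  have hMt : lam t ≤ M := by
    have h := hM t ⟨ht.1.le, ht.2⟩
    rw [Real.norm_eq_abs] at h
    linarith [le_abs_self (lam t)]
  simp only [hsym, rho]
  obtain ⟨w, hw⟩ : ∃ v, v = jw x * jw ξ := ⟨_, rfl⟩
  rw [← hw] at hwE ⊢
  obtain ⟨lt', hlt'⟩ : ∃ v, v = lam t := ⟨_, rfl⟩
  obtain ⟨Lt, hLt⟩ : ∃ v, v = Lam lam t := ⟨_, rfl⟩
  rw [← hlt'] at hlm hk hKb' hMt ⊢
  rw [← hLt] at hΛ hk hKb' ⊢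
  obtain ⟨L, hL'⟩ : ∃ v, v = Real.log w := ⟨_, rfl⟩
  rw [← hL']
  have he2 : (2:ℝ) ≤ Real.exp 1 := by have := Real.add_one_le_exp (1:ℝ); linarith
  have hw1 : (1:ℝ) < w := by linarith
  have hw0 : (0:ℝ) < w := by linarith
  have hL : 1 ≤ L := by
    rw [hL']; exact (Real.le_log_iff_exp_le hw0).mpr hwE
  have hL0 : (0:ℝ) < L := by linarith
  have hlogw : L ≤ w := by
    rw [hL']; have := Real.log_le_sub_one_of_pos hw0; linarith
  have hNL : 1 ≤ N * L := aux_NL hN hL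
  have hNL0 : 0 < N * L := by linarith
  set η : ℝ := Lt * w / (N * L) with hη_def
  have hη0 : 0 ≤ η := by positivity
  set q : ℝ := lt' ^ 2 / Lt * w * L with hq_def
  have hq0 : 0 ≤ q := by positivity
  set ρ : ℝ := Real.sqrt (1 + q) with hρ_eq
  have hρ1 : 1 ≤ ρ := by
    have h := Real.sqrt_le_sqrt (show (1:ℝ) ≤ 1 + q by linarith)
    rwa [Real.sqrt_one] at h
  have hρup : ρ ≤ Real.sqrt (1 + K) * w := by
    have hdivK : lt' ^ 2 / Lt ≤ K := (div_le_iff₀ hΛ).mpr hKb'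
    have hq_le : q ≤ K * w * L := by
      rw [hq_def]
      exact mul_le_mul_of_nonneg_right
        (mul_le_mul_of_nonneg_right hdivK hw0.le) hL0.le
    have h1 : 1 + q ≤ (1 + K) * w ^ 2 := aux_q_up hK hw1 hL0 hlogw hq_le
    calc ρ ≤ Real.sqrt ((1 + K) * w ^ 2) := Real.sqrt_le_sqrt h1
      _ = Real.sqrt (1 + K) * w := by
          rw [Real.sqrt_mul (by linarith : (0:ℝ) ≤ 1 + K), Real.sqrt_sq hw0.le]
  have hρlow : Lt * w ≤ 2 * (N * L) → lt' * w ≤ Real.sqrt (2 * N) * ρ := by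
    intro hcase
    have hstep : lt' ^ 2 * w ^ 2 ≤ 2 * N * q := by
      rw [hq_def, div_mul_eq_mul_div, div_mul_eq_mul_div, ← mul_div_assoc,
        le_div_iff₀ hΛ]
      exact aux_step hcase (by positivity)
    rw [hρ_eq, ← Real.sqrt_mul (by linarith : (0:ℝ) ≤ 2 * N)]
    apply (Real.le_sqrt (by positivity) (by positivity)).mpr
    rw [mul_pow]
    exact aux_step2 hN hq0 hstep
  have hlw_low : 1 ≤ Lt * w → a ≤ lt' * w := by
    intro hcase
    have haΛ : a * Lt ^ C₁ ≤ lt' := by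
      rw [ha_def, div_mul_eq_mul_div, div_le_iff₀ hLTC]
      linarith [hk]
    have hone : 1 ≤ Lt ^ C₁ * w := by
      rcases le_or_gt 1 Lt with hΛ1 | hΛ1
      · exact aux_one_le hw1 (Real.one_le_rpow hΛ1 hC₁0.le)
      · have h1 : Lt ≤ Lt ^ C₁ := by
          have := Real.rpow_le_rpow_of_exponent_ge hΛ hΛ1.le hC₁1.le
          rwa [Real.rpow_one] at this
        exact aux_one_le' hw0 h1 hcase
    exact aux_a_le ha hone (mul_le_mul_of_nonneg_right haΛ hw0.le)
  have hχη := hχ01 η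
  have hlmM : lt' ≤ |M| + 1 := by
    have := le_abs_self M
    linarith
  have hρC : ρ ≤ C * w := by
    rw [hC_def]
    exact aux_add_up hρup (by positivity) hw0
  have hlmC : lt' * w ≤ C * w := by
    rw [hC_def]
    exact aux_mul_up hlmM (Real.sqrt_nonneg _) hw0
  have hupper : ρ * χ η + lt' * w * (1 - χ η) ≤ C * w :=
    aux_convex_up hχη.1 hχη.2 hρC hlmC
  refine ⟨?_, hupper⟩
  have hc1 : c ≤ 1 := le_trans (min_le_left _ _) (min_le_left _ _)
  have hca : c ≤ a := le_trans (min_le_left _ _) (min_le_right _ _)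
  have hcs : c ≤ (Real.sqrt (2 * N))⁻¹ := min_le_right _ _
  have hlw0 : (0:ℝ) ≤ lt' * w := by positivity
  have hmρ : Lt * w ≤ 2 * (N * L) → c * max 1 (lt' * w) ≤ ρ := by
    intro hΛw
    have h2 := hρlow hΛw
    have h3 : (Real.sqrt (2 * N))⁻¹ * (lt' * w) ≤ ρ := by
      rw [inv_mul_le_iff₀ hsN]; exact h2.trans_eq (by ring)
    rcases le_total 1 (lt' * w) with h | h
    · rw [max_eq_right h]
      exact aux_cmul h3 hcs hlw0
    · rw [max_eq_left h]
      calc c * 1 = c := mul_one c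
        _ ≤ 1 := hc1
        _ ≤ ρ := hρ1
  have hml : 1 ≤ Lt * w → c * max 1 (lt' * w) ≤ lt' * w := by
    intro h1
    have halw := hlw_low h1
    rcases le_total 1 (lt' * w) with h | h
    · rw [max_eq_right h]; exact aux_cmul' hc1 hlw0
    · rw [max_eq_left h]
      calc c * 1 = c := mul_one c
        _ ≤ a := hca
        _ ≤ lt' * w := halw
  rcases le_or_gt η 1 with hcase | hcase
  · have hχ : χ η = 1 := hχ1 η (by rwa [abs_of_nonneg hη0])
    rw [hχ]
    simp only [mul_one, sub_self, mul_zero, add_zero]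
    apply hmρ
    rw [hη_def] at hcase
    have := (div_le_one hNL0).mp hcase
    linarith
  · rcases le_or_gt 2 η with hcase2 | hcase2
    · have hχ : χ η = 0 := hχ0 η (by rwa [abs_of_nonneg hη0])
      rw [hχ]
      simp only [mul_zero, sub_zero, mul_one, zero_add]
      apply hml
      rw [hη_def] at hcase2
      have := (le_div_iff₀ hNL0).mp hcase2
      linarith
    · have hΛw2 : Lt * w ≤ 2 * (N * L) := by
        rw [hη_def] at hcase2
        have := (div_le_iff₀ hNL0).mp hcase2.le
        linarith
      have hΛw1 : 1 ≤ Lt * w := by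
        rw [hη_def] at hcase
        have := (le_div_iff₀ hNL0).mp hcase.le
        linarith
      exact aux_convex_low hχη.1 hχη.2 (hmρ hΛw2) (hml hΛw1)
end

section
/- Let T > 0, let λ : [0,T] → [0,∞) be continuous, Λ(t) := ∫₀ᵗ λ(s) ds, and let c > 0. Let θ : [0,T] × ℝ^d × ℝ^d → ℝ be differentiable in (x,ξ) with |∇ₓθ(t,x,ξ)| ≤ c·λ(t)·⟨ξ⟩ and |∇_ξθ(t,x,ξ)| ≤ c·λ(t)·⟨x⟩ for all (t,x,ξ). Suppose q, p : [s, t₀] → ℝ^d (with 0 ≤ s ≤ t₀ ≤ T) are differentiable and solve q'(τ) = ∇_ξθ(τ, q(τ), p(τ)), p'(τ) = −∇ₓθ(τ, q(τ), p(τ)). Then for all s ≤ t ≤ t₀: ⟨p(s)⟩·e^{2c(Λ(s)−Λ(t))} ≤ ⟨p(t)⟩ ≤ ⟨p(s)⟩·e^{2c(Λ(t)−Λ(s))} and ⟨q(s)⟩·e^{2c(Λ(s)−Λ(t))} ≤ ⟨q(t)⟩ ≤ ⟨q(s)⟩·e^{2c(Λ(t)−Λ(s))}. -/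
open Set Real

section Weight

variable {d : ℕ}

lemma jw_pos (y : EuclideanSpace ℝ (Fin d)) : 0 < jw y :=
  sqrt_pos.2 (by positivity)

lemma sq_jw (y : EuclideanSpace ℝ (Fin d)) : jw y ^ 2 = exp 1 + ‖y‖ ^ 2 :=
  sq_sqrt (by positivity)

lemma norm_le_jw (y : EuclideanSpace ℝ (Fin d)) : ‖y‖ ≤ jw y :=
  le_sqrt_of_sq_le (by linarith [exp_pos 1])

lemma log_jw (y : EuclideanSpace ℝ (Fin d)) : log (jw y) = log (exp 1 + ‖y‖ ^ 2) / 2 :=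
  log_sqrt (by positivity)

lemma abs_inner_le_mul_jw_sq {y w : EuclideanSpace ℝ (Fin d)} {m : ℝ} (hw : ‖w‖ ≤ m * jw y) :
    |inner ℝ y w| ≤ m * jw y ^ 2 :=
  calc |inner ℝ y w| ≤ ‖y‖ * ‖w‖ := abs_real_inner_le_norm y w
    _ ≤ jw y * (m * jw y) := mul_le_mul (norm_le_jw y) hw (norm_nonneg w) (jw_pos y).le
    _ = m * jw y ^ 2 := by ring

end Weight

lemma abs_sub_le_sub_of_abs_deriv_le {a b t : ℝ} {f f' g g' : ℝ → ℝ}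
    (hfc : ContinuousOn f (Icc a b)) (hgc : ContinuousOn g (Icc a b))
    (hf : ∀ τ ∈ Ioo a b, HasDerivAt f (f' τ) τ) (hg : ∀ τ ∈ Ioo a b, HasDerivAt g (g' τ) τ)
    (hle : ∀ τ ∈ Ioo a b, |f' τ| ≤ g' τ) (ht : t ∈ Icc a b) :
    |f t - f a| ≤ g t - g a := by
  have mono : ∀ {h h' : ℝ → ℝ}, ContinuousOn h (Icc a b) →
      (∀ τ ∈ Ioo a b, HasDerivAt h (h' τ) τ) → (∀ τ ∈ Ioo a b, 0 ≤ h' τ) → h a ≤ h t :=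
    fun hc hd h0 => monotoneOn_of_hasDerivWithinAt_nonneg (convex_Icc a b) hc
      (by simpa only [interior_Icc] using fun τ hτ => (hd τ hτ).hasDerivWithinAt)
      (by simpa only [interior_Icc] using h0) (left_mem_Icc.2 (ht.1.trans ht.2)) ht ht.1
  have hsub := mono (h := fun τ => g τ - f τ) (hgc.sub hfc) (fun τ hτ => (hg τ hτ).sub (hf τ hτ))
    (fun τ hτ => sub_nonneg.2 (le_of_abs_le (hle τ hτ)))
  have hadd := mono (h := fun τ => g τ + f τ) (hgc.add hfc) (fun τ hτ => (hg τ hτ).add (hf τ hτ))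
    (fun τ hτ => by linarith [neg_abs_le (f' τ), hle τ hτ])
  rw [abs_le]
  constructor <;> linarith

lemma abs_log_jw_sub_le {d : ℕ} {a b t : ℝ} {m M : ℝ → ℝ} {u v : ℝ → EuclideanSpace ℝ (Fin d)}
    (hMc : ContinuousOn M (Icc a b)) (hM : ∀ τ ∈ Ioo a b, HasDerivAt M (m τ) τ)
    (hu : ∀ τ ∈ Icc a b, HasDerivWithinAt u (v τ) (Icc a b) τ)
    (hv : ∀ τ ∈ Icc a b, ‖v τ‖ ≤ m τ * jw (u τ)) (ht : t ∈ Icc a b) :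
    |log (jw (u t)) - log (jw (u a))| ≤ M t - M a := by
  have hF : ∀ τ ∈ Icc a b, HasDerivWithinAt (fun τ => log (exp 1 + ‖u τ‖ ^ 2))
      (2 * inner ℝ (u τ) (v τ) / jw (u τ) ^ 2) (Icc a b) τ := fun τ hτ => by
    rw [sq_jw]
    exact ((hu τ hτ).norm_sq.const_add _).log (by positivity)
  have hF' : ∀ τ ∈ Icc a b, |2 * inner ℝ (u τ) (v τ) / jw (u τ) ^ 2| ≤ 2 * m τ := fun τ hτ => by
    have hj := pow_pos (jw_pos (u τ)) 2
    rw [abs_div, abs_mul, abs_two, abs_of_pos hj, div_le_iff₀ hj]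
    linarith [abs_inner_le_mul_jw_sq (hv τ hτ)]
  have key := abs_sub_le_sub_of_abs_deriv_le (g := fun τ => 2 * M τ)
    (fun τ hτ => (hF τ hτ).continuousWithinAt) (continuousOn_const.mul hMc)
    (fun τ hτ => (hF τ (Ioo_subset_Icc_self hτ)).hasDerivAt (Icc_mem_nhds hτ.1 hτ.2))
    (fun τ hτ => (hM τ hτ).const_mul 2) (fun τ hτ => hF' τ (Ioo_subset_Icc_self hτ)) ht
  rw [log_jw, log_jw, ← sub_div, abs_div, abs_two]
  linarith

lemma mul_exp_neg_le_and_le_mul_exp_of_abs_log_sub_le {A B K : ℝ} (hA : 0 < A) (hB : 0 < B)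
    (h : |log B - log A| ≤ K) : A * exp (-K) ≤ B ∧ B ≤ A * exp K := by
  rw [abs_le] at h
  rw [← exp_log hA, ← exp_log hB, ← exp_add, ← exp_add, exp_le_exp, exp_le_exp]
  constructor <;> linarith

lemma continuousOn_Lam {lam : ℝ → ℝ} {T : ℝ} (h : ContinuousOn lam (Icc 0 T)) :
    ContinuousOn (Lam lam) (Icc 0 T) := by
  rcases le_total 0 T with hT | hT
  · rw [← uIcc_of_le hT] at h ⊢
    exact intervalIntegral.continuousOn_primitive_interval (h.integrableOn_compact isCompact_uIcc)
  · exact (subsingleton_Icc_of_ge hT).continuousOn _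

lemma hasDerivAt_Lam_s12 {lam : ℝ → ℝ} {T τ : ℝ} (h : ContinuousOn lam (Icc 0 T))
    (hτ : τ ∈ Ioo 0 T) : HasDerivAt (Lam lam) (lam τ) τ :=
  intervalIntegral.integral_hasDerivAt_right
    ((h.mono (by rw [uIcc_of_le hτ.1.le]; exact Icc_subset_Icc_right hτ.2.le)).intervalIntegrable)
    ((h.mono Ioo_subset_Icc_self).stronglyMeasurableAtFilter isOpen_Ioo τ hτ)
    (h.continuousAt (Icc_mem_nhds hτ.1 hτ.2))

theorem hamiltonian_flow_gronwall_general
    (d : ℕ) (T : ℝ) (lam : ℝ → ℝ)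
    (hcont : ContinuousOn lam (Set.Icc 0 T))
    (c : ℝ)
    (θ : ℝ → EuclideanSpace ℝ (Fin d) → EuclideanSpace ℝ (Fin d) → ℝ)
    (hgx : ∀ t ∈ Set.Icc 0 T, ∀ (x ξ : EuclideanSpace ℝ (Fin d)),
      ‖gradient (fun x' => θ t x' ξ) x‖ ≤ c * lam t * jw ξ)
    (hgξ : ∀ t ∈ Set.Icc 0 T, ∀ (x ξ : EuclideanSpace ℝ (Fin d)),
      ‖gradient (fun ξ' => θ t x ξ') ξ‖ ≤ c * lam t * jw x)
    (s t₀ : ℝ) (hs : 0 ≤ s) (ht₀ : t₀ ≤ T)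
    (q p : ℝ → EuclideanSpace ℝ (Fin d))
    (hq : ∀ τ ∈ Set.Icc s t₀, HasDerivWithinAt q
      (gradient (fun ξ' => θ τ (q τ) ξ') (p τ)) (Set.Icc s t₀) τ)
    (hp : ∀ τ ∈ Set.Icc s t₀, HasDerivWithinAt p
      (-(gradient (fun x' => θ τ x' (p τ)) (q τ))) (Set.Icc s t₀) τ) :
    ∀ t ∈ Set.Icc s t₀,
      jw (p s) * Real.exp (2 * c * (Lam lam s - Lam lam t)) ≤ jw (p t) ∧
      jw (p t) ≤ jw (p s) * Real.exp (2 * c * (Lam lam t - Lam lam s)) ∧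
      jw (q s) * Real.exp (2 * c * (Lam lam s - Lam lam t)) ≤ jw (q t) ∧
      jw (q t) ≤ jw (q s) * Real.exp (2 * c * (Lam lam t - Lam lam s)) := by
  intro t ht
  have hsub : Icc s t₀ ⊆ Icc 0 T := Icc_subset_Icc hs ht₀
  have hMc : ContinuousOn (fun τ => c * Lam lam τ) (Icc s t₀) :=
    continuousOn_const.mul ((continuousOn_Lam hcont).mono hsub)
  have hM : ∀ τ ∈ Ioo s t₀, HasDerivAt (fun τ => c * Lam lam τ) (c * lam τ) τ := fun τ hτ =>
    (hasDerivAt_Lam_s12 hcont ⟨hs.trans_lt hτ.1, hτ.2.trans_le ht₀⟩).const_mul c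
  have hP := abs_log_jw_sub_le hMc hM hp
    (fun τ hτ => (norm_neg _).trans_le (hgx τ (hsub hτ) _ _)) ht
  have hQ := abs_log_jw_sub_le hMc hM hq (fun τ hτ => hgξ τ (hsub hτ) _ _) ht
  have hK : c * Lam lam t - c * Lam lam s ≤ 2 * c * (Lam lam t - Lam lam s) := by
    linarith [(abs_nonneg _).trans hP]
  obtain ⟨hp₁, hp₂⟩ :=
    mul_exp_neg_le_and_le_mul_exp_of_abs_log_sub_le (jw_pos _) (jw_pos _) (hP.trans hK)
  obtain ⟨hq₁, hq₂⟩ :=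
    mul_exp_neg_le_and_le_mul_exp_of_abs_log_sub_le (jw_pos _) (jw_pos _) (hQ.trans hK)
  rw [← neg_sub (Lam lam t), mul_neg]
  exact ⟨hp₁, hp₂, hq₁, hq₂⟩

/-- The Gronwall estimate on the Hamiltonian flow from the proof of Lemma 5.2 of the
paper: `⟨p(s)⟩e^{2c(Λ(s)−Λ(t))} ≤ ⟨p(t)⟩ ≤ ⟨p(s)⟩e^{2c(Λ(t)−Λ(s))}`, and the same
for `q`. -/
theorem hamiltonian_flow_gronwall
    (d : ℕ) (T : ℝ) (hT : 0 < T) (lam : ℝ → ℝ)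
    (hcont : ContinuousOn lam (Set.Icc 0 T))
    (hnn : ∀ t ∈ Set.Icc 0 T, 0 ≤ lam t)
    (c : ℝ) (hc : 0 < c)
    (θ : ℝ → EuclideanSpace ℝ (Fin d) → EuclideanSpace ℝ (Fin d) → ℝ)
    (hdiffx : ∀ t ∈ Set.Icc 0 T, ∀ (x ξ : EuclideanSpace ℝ (Fin d)),
      DifferentiableAt ℝ (fun x' => θ t x' ξ) x)
    (hdiffξ : ∀ t ∈ Set.Icc 0 T, ∀ (x ξ : EuclideanSpace ℝ (Fin d)),
      DifferentiableAt ℝ (fun ξ' => θ t x ξ') ξ)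
    (hgx : ∀ t ∈ Set.Icc 0 T, ∀ (x ξ : EuclideanSpace ℝ (Fin d)),
      ‖gradient (fun x' => θ t x' ξ) x‖ ≤ c * lam t * jw ξ)
    (hgξ : ∀ t ∈ Set.Icc 0 T, ∀ (x ξ : EuclideanSpace ℝ (Fin d)),
      ‖gradient (fun ξ' => θ t x ξ') ξ‖ ≤ c * lam t * jw x)
    (s t₀ : ℝ) (hs : 0 ≤ s) (hst : s ≤ t₀) (ht₀ : t₀ ≤ T)
    (q p : ℝ → EuclideanSpace ℝ (Fin d))
    (hq : ∀ τ ∈ Set.Icc s t₀, HasDerivWithinAt q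
      (gradient (fun ξ' => θ τ (q τ) ξ') (p τ)) (Set.Icc s t₀) τ)
    (hp : ∀ τ ∈ Set.Icc s t₀, HasDerivWithinAt p
      (-(gradient (fun x' => θ τ x' (p τ)) (q τ))) (Set.Icc s t₀) τ) :
    ∀ t ∈ Set.Icc s t₀,
      jw (p s) * Real.exp (2 * c * (Lam lam s - Lam lam t)) ≤ jw (p t) ∧
      jw (p t) ≤ jw (p s) * Real.exp (2 * c * (Lam lam t - Lam lam s)) ∧
      jw (q s) * Real.exp (2 * c * (Lam lam s - Lam lam t)) ≤ jw (q t) ∧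
      jw (q t) ≤ jw (q s) * Real.exp (2 * c * (Lam lam t - Lam lam s)) :=
  hamiltonian_flow_gronwall_general d T lam hcont c θ hgx hgξ s t₀ hs ht₀ q p hq hp
end

section
/- Let T > 0, λ : [0,T] → [0,∞) continuous, Λ(t) := ∫₀ᵗ λ(s) ds, and c > 0. Let θ : [0,T] × ℝ^d × ℝ^d → ℝ be differentiable in (x,ξ) with |∇ₓθ(t,x,ξ)| ≤ c·λ(t)·⟨ξ⟩ and |∇_ξθ(t,x,ξ)| ≤ c·λ(t)·⟨x⟩. Then there exists C > 0 depending only on c and Λ(T) such that any differentiable solution q, p : [s,t₀] → ℝ^d (0 ≤ s ≤ t₀ ≤ T) of q' = ∇_ξθ(τ,q,p), p' = −∇ₓθ(τ,q,p) with q(s) = y, p(s) = η satisfies, for all t ∈ [s,t₀]: |q(t) − y| ≤ C·Λ(t)·⟨y⟩ and |p(t) − η| ≤ C·Λ(t)·⟨η⟩. -/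
/-!
Each half of the flow satisfies a differential inequality in its own variable alone:
`‖q'‖ ≤ cλ⟨q⟩` and `‖p'‖ ≤ cλ⟨p⟩`. For a curve with `‖f'‖ ≤ K' (e + ‖f‖)`, `K' ≥ 0`, a Gronwall
comparison gives `‖f t - f s‖ ≤ (e + ‖f s‖) (exp (K t - K s) - 1)`. With `K = cΛ`,
`exp x - 1 ≤ x exp x` and `⟨y⟩ ≤ √e + ‖y‖ ≤ 2⟨y⟩`, this is the estimate with `C = 2c exp (cΛ(T))`.
-/

open Set Real Filter Topology

lemma HasDerivWithinAt.Ici_of_Icc {E : Type*} [NormedAddCommGroup E] [NormedSpace ℝ E]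
    {f : ℝ → E} {f' : E} {a b x : ℝ} (h : HasDerivWithinAt f f' (Icc a b) x) (hx : x ∈ Ico a b) :
    HasDerivWithinAt f f' (Ici x) x :=
  h.mono_of_mem_nhdsWithin (Icc_mem_nhdsGE_of_mem hx)

section Gronwall

variable {E : Type*} [NormedAddCommGroup E] [NormedSpace ℝ E]
  {f f' : ℝ → E} {K k : ℝ → ℝ} {a b e : ℝ}

/- The comparison principle needs a fence whose growth strictly beats the bound where they touch,
hence the perturbation by `ε`. -/
lemma norm_sub_le_perturbed_of_norm_deriv_le {ε : ℝ} (hε : 0 < ε) (he : 0 ≤ e)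
    (hf : ∀ x ∈ Icc a b, HasDerivWithinAt f (f' x) (Icc a b) x)
    (hK : ∀ x ∈ Icc a b, HasDerivWithinAt K (k x) (Icc a b) x)
    (hk : ∀ x ∈ Icc a b, 0 ≤ k x)
    (bound : ∀ x ∈ Icc a b, ‖f' x‖ ≤ k x * (e + ‖f x‖)) :
    ∀ x ∈ Icc a b,
      ‖f x - f a‖ ≤ (e + ‖f a‖ + ε) * exp (K x - K a + ε * (x - a)) - (e + ‖f a‖) := by
  set u := e + ‖f a‖
  have hfence : ∀ x ∈ Icc a b,
      HasDerivWithinAt (fun x => (u + ε) * exp (K x - K a + ε * (x - a)) - u)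
        ((u + ε) * (exp (K x - K a + ε * (x - a)) * (k x + ε))) (Icc a b) x := by
    intro x hx
    have hlinear : HasDerivAt (fun x : ℝ => ε * (x - a)) ε x := by
      simpa using ((hasDerivAt_id x).sub_const a).const_mul ε
    exact ((((hK x hx).sub_const (K a)).add hlinear.hasDerivWithinAt).exp.const_mul
      (u + ε)).sub_const u
  refine image_norm_le_of_norm_deriv_right_lt_deriv_boundary'
    (fun x hx => ((hf x hx).sub_const (f a)).continuousWithinAt)
    (fun x hx => ((hf x (Ico_subset_Icc_self hx)).sub_const (f a)).Ici_of_Icc hx)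
    (by simp [hε.le]) (fun x hx => (hfence x hx).continuousWithinAt)
    (fun x hx => (hfence x (Ico_subset_Icc_self hx)).Ici_of_Icc hx) ?_
  intro x hx hx_touch
  have hx' := Ico_subset_Icc_self hx
  have hfence_pos : 0 < (u + ε) * exp (K x - K a + ε * (x - a)) := by positivity
  have hfx : e + ‖f x‖ ≤ (u + ε) * exp (K x - K a + ε * (x - a)) := by
    linarith [norm_le_insert' (f x) (f a)]
  calc ‖f' x‖ ≤ k x * (e + ‖f x‖) := bound x hx'
    _ ≤ k x * ((u + ε) * exp (K x - K a + ε * (x - a))) :=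
      mul_le_mul_of_nonneg_left hfx (hk x hx')
    _ < (u + ε) * (exp (K x - K a + ε * (x - a)) * (k x + ε)) := by nlinarith

theorem norm_sub_le_mul_exp_sub_one_of_norm_deriv_le (he : 0 ≤ e)
    (hf : ∀ x ∈ Icc a b, HasDerivWithinAt f (f' x) (Icc a b) x)
    (hK : ∀ x ∈ Icc a b, HasDerivWithinAt K (k x) (Icc a b) x)
    (hk : ∀ x ∈ Icc a b, 0 ≤ k x)
    (bound : ∀ x ∈ Icc a b, ‖f' x‖ ≤ k x * (e + ‖f x‖)) :
    ∀ x ∈ Icc a b, ‖f x - f a‖ ≤ (e + ‖f a‖) * (exp (K x - K a) - 1) := by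
  intro x hx
  set u := e + ‖f a‖
  have hlim : Tendsto (fun ε => (u + ε) * exp (K x - K a + ε * (x - a)) - u) (𝓝[>] 0)
      (𝓝 (u * (exp (K x - K a) - 1))) := by
    have hcont : Continuous (fun ε => (u + ε) * exp (K x - K a + ε * (x - a)) - u) := by
      fun_prop
    convert (hcont.tendsto 0).mono_left nhdsWithin_le_nhds using 2
    simp only [add_zero, zero_mul]
    ring
  exact ge_of_tendsto hlim (eventually_nhdsWithin_of_forall fun ε hε =>
    norm_sub_le_perturbed_of_norm_deriv_le hε he hf hK hk bound x hx)

end Gronwall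

lemma exp_sub_one_le_mul_exp (x : ℝ) : exp x - 1 ≤ x * exp x := by
  have h := mul_le_mul_of_nonneg_right (one_sub_le_exp_neg x) (exp_pos x).le
  rw [← exp_add, neg_add_cancel, exp_zero] at h
  linarith

section Weight

variable {d : ℕ}

lemma jw_le_sqrt_exp_one_add_norm (y : EuclideanSpace ℝ (Fin d)) :
    jw y ≤ √(exp 1) + ‖y‖ := by
  rw [jw, sqrt_le_iff]
  refine ⟨by positivity, ?_⟩
  nlinarith [sq_sqrt (exp_pos 1).le, sqrt_nonneg (exp 1), norm_nonneg y]

lemma sqrt_exp_one_add_norm_le_two_mul_jw (y : EuclideanSpace ℝ (Fin d)) :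
    √(exp 1) + ‖y‖ ≤ 2 * jw y := by
  have h_exp : √(exp 1) ≤ jw y := sqrt_le_sqrt (le_add_of_nonneg_right (by positivity))
  have h_norm : ‖y‖ ≤ jw y :=
    (le_sqrt (norm_nonneg y) (by positivity)).2 (by linarith [exp_pos 1])
  linarith

end Weight

section Lam

variable {lam : ℝ → ℝ} {T : ℝ}

lemma hasDerivWithinAt_Lam (hcont : ContinuousOn lam (Icc 0 T)) {x : ℝ} (hx : x ∈ Icc 0 T) :
    HasDerivWithinAt (Lam lam) (lam x) (Icc 0 T) x := by
  have : Fact (x ∈ Icc 0 T) := ⟨hx⟩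
  refine intervalIntegral.integral_hasDerivWithinAt_right ?_
    (hcont.stronglyMeasurableAtFilter_nhdsWithin measurableSet_Icc x) (hcont x hx)
  exact (hcont.mono (by rw [uIcc_of_le hx.1]; exact Icc_subset_Icc_right hx.2)).intervalIntegrable

lemma Lam_monotoneOn (hcont : ContinuousOn lam (Icc 0 T)) (hnn : ∀ t ∈ Icc 0 T, 0 ≤ lam t) :
    MonotoneOn (Lam lam) (Icc 0 T) := by
  refine monotoneOn_of_hasDerivWithinAt_nonneg (convex_Icc 0 T)
    (fun x hx => (hasDerivWithinAt_Lam hcont hx).continuousWithinAt) (fun x hx => ?_)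
    (fun x hx => hnn x (interior_subset hx))
  exact (hasDerivWithinAt_Lam hcont (interior_subset hx)).mono interior_subset

end Lam

theorem norm_sub_le_of_norm_deriv_le_mul_jw {d : ℕ} {f f' : ℝ → EuclideanSpace ℝ (Fin d)}
    {lam : ℝ → ℝ} {T c s t₀ : ℝ} (hcont : ContinuousOn lam (Icc 0 T))
    (hnn : ∀ t ∈ Icc 0 T, 0 ≤ lam t) (hc : 0 ≤ c) (hs : 0 ≤ s) (ht₀ : t₀ ≤ T)
    (hf : ∀ τ ∈ Icc s t₀, HasDerivWithinAt f (f' τ) (Icc s t₀) τ)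
    (bound : ∀ τ ∈ Icc s t₀, ‖f' τ‖ ≤ c * lam τ * jw (f τ)) :
    ∀ t ∈ Icc s t₀, ‖f t - f s‖ ≤ 2 * c * exp (c * Lam lam T) * Lam lam t * jw (f s) := by
  intro t ht
  have hsub : Icc s t₀ ⊆ Icc 0 T := Icc_subset_Icc hs ht₀
  have hdev := norm_sub_le_mul_exp_sub_one_of_norm_deriv_le (K := fun τ => c * Lam lam τ)
    (sqrt_nonneg (exp 1)) hf
    (fun τ hτ => ((hasDerivWithinAt_Lam hcont (hsub hτ)).mono hsub).const_mul c)
    (fun τ hτ => mul_nonneg hc (hnn τ (hsub hτ)))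
    (fun τ hτ => (bound τ hτ).trans (mul_le_mul_of_nonneg_left (jw_le_sqrt_exp_one_add_norm _)
      (mul_nonneg hc (hnn τ (hsub hτ))))) t ht
  have hmono := Lam_monotoneOn hcont hnn
  have ht_mem : t ∈ Icc 0 T := hsub ht
  have hs_mem : s ∈ Icc 0 T := hsub ⟨le_rfl, ht.1.trans ht.2⟩
  have hLam_s : 0 ≤ Lam lam s := by
    simpa [Lam] using hmono ⟨le_rfl, hs_mem.1.trans hs_mem.2⟩ hs_mem hs_mem.1
  have hLam_st : Lam lam s ≤ Lam lam t := hmono hs_mem ht_mem ht.1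
  have hLam_tT : Lam lam t ≤ Lam lam T := hmono ht_mem ⟨ht_mem.1.trans ht_mem.2, le_rfl⟩ ht_mem.2
  set Δ := c * Lam lam t - c * Lam lam s
  have hΔ_nonneg : 0 ≤ Δ := by nlinarith
  have hΔ_le_t : Δ ≤ c * Lam lam t := by nlinarith
  have hΔ_le_T : Δ ≤ c * Lam lam T := by nlinarith
  calc ‖f t - f s‖ ≤ (√(exp 1) + ‖f s‖) * (exp Δ - 1) := hdev
    _ ≤ (√(exp 1) + ‖f s‖) * (Δ * exp Δ) :=
      mul_le_mul_of_nonneg_left (exp_sub_one_le_mul_exp Δ) (by positivity)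
    _ ≤ 2 * jw (f s) * (c * Lam lam t * exp (c * Lam lam T)) :=
      mul_le_mul (sqrt_exp_one_add_norm_le_two_mul_jw _)
        (mul_le_mul hΔ_le_t (exp_le_exp.2 hΔ_le_T) (exp_pos _).le (by nlinarith))
        (mul_nonneg hΔ_nonneg (exp_pos _).le) (mul_nonneg zero_le_two (sqrt_nonneg _))
    _ = 2 * c * exp (c * Lam lam T) * Lam lam t * jw (f s) := by ring

theorem hyperbolic_zone_flow_deviation_general
    (d : ℕ) (T : ℝ) (lam : ℝ → ℝ)
    (hcont : ContinuousOn lam (Set.Icc 0 T))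
    (hnn : ∀ t ∈ Set.Icc 0 T, 0 ≤ lam t)
    (c : ℝ) (hc : 0 < c) :
    ∃ C : ℝ, 0 < C ∧
      ∀ θ : ℝ → EuclideanSpace ℝ (Fin d) → EuclideanSpace ℝ (Fin d) → ℝ,
        (∀ t ∈ Set.Icc 0 T, ∀ (x ξ : EuclideanSpace ℝ (Fin d)),
          DifferentiableAt ℝ (fun x' => θ t x' ξ) x) →
        (∀ t ∈ Set.Icc 0 T, ∀ (x ξ : EuclideanSpace ℝ (Fin d)),
          DifferentiableAt ℝ (fun ξ' => θ t x ξ') ξ) →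
        (∀ t ∈ Set.Icc 0 T, ∀ (x ξ : EuclideanSpace ℝ (Fin d)),
          ‖gradient (fun x' => θ t x' ξ) x‖ ≤ c * lam t * jw ξ) →
        (∀ t ∈ Set.Icc 0 T, ∀ (x ξ : EuclideanSpace ℝ (Fin d)),
          ‖gradient (fun ξ' => θ t x ξ') ξ‖ ≤ c * lam t * jw x) →
      ∀ s t₀ : ℝ, 0 ≤ s → s ≤ t₀ → t₀ ≤ T →
      ∀ q p : ℝ → EuclideanSpace ℝ (Fin d),
        (∀ τ ∈ Set.Icc s t₀, HasDerivWithinAt q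
          (gradient (fun ξ' => θ τ (q τ) ξ') (p τ)) (Set.Icc s t₀) τ) →
        (∀ τ ∈ Set.Icc s t₀, HasDerivWithinAt p
          (-(gradient (fun x' => θ τ x' (p τ)) (q τ))) (Set.Icc s t₀) τ) →
      ∀ t ∈ Set.Icc s t₀,
        ‖q t - q s‖ ≤ C * Lam lam t * jw (q s) ∧
        ‖p t - p s‖ ≤ C * Lam lam t * jw (p s) := by
  refine ⟨2 * c * exp (c * Lam lam T), by positivity, ?_⟩
  intro θ _ _ hgrad_x hgrad_ξ s t₀ hs _ ht₀ q p hq hp t ht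
  have hsub : Icc s t₀ ⊆ Icc 0 T := Icc_subset_Icc hs ht₀
  exact ⟨norm_sub_le_of_norm_deriv_le_mul_jw hcont hnn hc.le hs ht₀ hq
      (fun τ hτ => hgrad_ξ τ (hsub hτ) _ _) t ht,
    norm_sub_le_of_norm_deriv_le_mul_jw hcont hnn hc.le hs ht₀ hp
      (fun τ hτ => (norm_neg _).trans_le (hgrad_x τ (hsub hτ) _ _)) t ht⟩

/-- Estimate (5.4) of Lemma 5.3 of the paper (case `j = k = 0`, `α = β = 0`): in the
hyperbolic zone, the Hamiltonian flow satisfies `|q(t) − y| ≤ C·Λ(t)·⟨y⟩` and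
`|p(t) − η| ≤ C·Λ(t)·⟨η⟩`, where `C` depends only on `c` and `Λ(T)`. -/
theorem hyperbolic_zone_flow_deviation
    (d : ℕ) (T : ℝ) (hT : 0 < T) (lam : ℝ → ℝ)
    (hcont : ContinuousOn lam (Set.Icc 0 T))
    (hnn : ∀ t ∈ Set.Icc 0 T, 0 ≤ lam t)
    (c : ℝ) (hc : 0 < c) :
    ∃ C : ℝ, 0 < C ∧
      ∀ θ : ℝ → EuclideanSpace ℝ (Fin d) → EuclideanSpace ℝ (Fin d) → ℝ,
        (∀ t ∈ Set.Icc 0 T, ∀ (x ξ : EuclideanSpace ℝ (Fin d)),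
          DifferentiableAt ℝ (fun x' => θ t x' ξ) x) →
        (∀ t ∈ Set.Icc 0 T, ∀ (x ξ : EuclideanSpace ℝ (Fin d)),
          DifferentiableAt ℝ (fun ξ' => θ t x ξ') ξ) →
        (∀ t ∈ Set.Icc 0 T, ∀ (x ξ : EuclideanSpace ℝ (Fin d)),
          ‖gradient (fun x' => θ t x' ξ) x‖ ≤ c * lam t * jw ξ) →
        (∀ t ∈ Set.Icc 0 T, ∀ (x ξ : EuclideanSpace ℝ (Fin d)),
          ‖gradient (fun ξ' => θ t x ξ') ξ‖ ≤ c * lam t * jw x) →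
      ∀ s t₀ : ℝ, 0 ≤ s → s ≤ t₀ → t₀ ≤ T →
      ∀ q p : ℝ → EuclideanSpace ℝ (Fin d),
        (∀ τ ∈ Set.Icc s t₀, HasDerivWithinAt q
          (gradient (fun ξ' => θ τ (q τ) ξ') (p τ)) (Set.Icc s t₀) τ) →
        (∀ τ ∈ Set.Icc s t₀, HasDerivWithinAt p
          (-(gradient (fun x' => θ τ x' (p τ)) (q τ))) (Set.Icc s t₀) τ) →
      ∀ t ∈ Set.Icc s t₀,
        ‖q t - q s‖ ≤ C * Lam lam t * jw (q s) ∧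
        ‖p t - p s‖ ≤ C * Lam lam t * jw (p s) :=
  hyperbolic_zone_flow_deviation_general d T lam hcont hnn c hc
end

section
/- Let T > 0, let λ : [0,T] → [0,∞) be continuous with λ > 0 on (0,T], Λ(t) := ∫₀ᵗ λ(s) ds, and assume λ(t)² ≤ K·Λ(t) on (0,T]. Fix N > 0, a real r ≥ e, and t* ∈ (0,T] with Λ(t*)·r = N·ln r. Then ∫₀^{t*} (1 + (λ(τ)²/Λ(τ))·r·ln r)^{1/2} dτ ≤ T + 2·√N·ln r. -/
open Real Set MeasureTheory intervalIntegral

theorem sqrt_add_le_sqrt_add_sqrt (x y : ℝ) : √(x + y) ≤ √x + √y := by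
  refine sqrt_le_iff.2 ⟨by positivity, ?_⟩
  nlinarith [sq_sqrt' (x := x), sq_sqrt' (x := y), le_max_left x 0, le_max_left y 0,
    sqrt_nonneg x, sqrt_nonneg y, mul_nonneg (sqrt_nonneg x) (sqrt_nonneg y)]

theorem sqrt_one_add_sq_div_mul_le (l L : ℝ) {c : ℝ} (hc : 0 ≤ c) :
    √(1 + l ^ 2 / L * c) ≤ 1 + √c * (|l| / √L) := by
  have h := sqrt_add_le_sqrt_add_sqrt 1 (l ^ 2 / L * c)
  rw [sqrt_one, sqrt_mul' _ hc, sqrt_div (sq_nonneg l), sqrt_sq_eq_abs] at h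
  exact h.trans_eq (by ring)

theorem integral_mono_of_nonneg_on_Ioc {f g : ℝ → ℝ} {a b : ℝ} (hab : a ≤ b)
    (hg : IntervalIntegrable g volume a b) (hf : ∀ x ∈ Ioc a b, 0 ≤ f x)
    (h : ∀ x ∈ Ioc a b, f x ≤ g x) : ∫ x in a..b, f x ≤ ∫ x in a..b, g x := by
  rw [integral_of_le hab, integral_of_le hab]
  exact integral_mono_of_nonneg (ae_restrict_of_forall_mem measurableSet_Ioc hf) hg.1
    (ae_restrict_of_forall_mem measurableSet_Ioc h)

section DivSqrt

variable {F f : ℝ → ℝ} {a b : ℝ}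

theorem HasDerivAt.two_mul_sqrt {x f' : ℝ} (hF : HasDerivAt F f' x) (hx : F x ≠ 0) :
    HasDerivAt (fun y => 2 * √(F y)) (f' / √(F x)) x :=
  ((hF.sqrt hx).const_mul 2).congr_deriv (by ring)

theorem intervalIntegrable_div_sqrt (hab : a ≤ b) (hF : ContinuousOn F (Icc a b))
    (hderiv : ∀ x ∈ Ioo a b, HasDerivAt F (f x) x) (hFpos : ∀ x ∈ Ioo a b, 0 < F x)
    (hf : ∀ x ∈ Ioo a b, 0 ≤ f x) :
    IntervalIntegrable (fun x => f x / √(F x)) volume a b :=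
  (intervalIntegrable_iff_integrableOn_Ioc_of_le hab).2 <|
    integrableOn_deriv_of_nonneg (continuousOn_const.mul hF.sqrt)
      (fun x hx => (hderiv x hx).two_mul_sqrt (hFpos x hx).ne')
      (fun x hx => div_nonneg (hf x hx) (sqrt_nonneg _))

theorem integral_div_sqrt (hab : a ≤ b) (hF : ContinuousOn F (Icc a b))
    (hderiv : ∀ x ∈ Ioo a b, HasDerivAt F (f x) x) (hFpos : ∀ x ∈ Ioo a b, 0 < F x)
    (hf : ∀ x ∈ Ioo a b, 0 ≤ f x) :
    ∫ x in a..b, f x / √(F x) = 2 * √(F b) - 2 * √(F a) :=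
  integral_eq_sub_of_hasDerivAt_of_le hab (continuousOn_const.mul hF.sqrt)
    (fun x hx => (hderiv x hx).two_mul_sqrt (hFpos x hx).ne')
    (intervalIntegrable_div_sqrt hab hF hderiv hFpos hf)

end DivSqrt

section Lam

variable {lam : ℝ → ℝ} {t : ℝ}

theorem continuousOn_Lam_s17 (hcont : ContinuousOn lam (Icc 0 t)) (ht : 0 ≤ t) :
    ContinuousOn (Lam lam) (Icc 0 t) := by
  have h := continuousOn_primitive_interval' (μ := volume) (hcont.intervalIntegrable_of_Icc ht)
    left_mem_uIcc
  rwa [uIcc_of_le ht] at h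

theorem hasDerivAt_Lam_s17 (hcont : ContinuousOn lam (Icc 0 t)) {x : ℝ} (hx : x ∈ Ioo 0 t) :
    HasDerivAt (Lam lam) (lam x) x :=
  integral_hasDerivAt_right
    ((hcont.mono (Icc_subset_Icc_right hx.2.le)).intervalIntegrable_of_Icc hx.1.le)
    ((hcont.mono Ioo_subset_Icc_self).stronglyMeasurableAtFilter isOpen_Ioo x hx)
    (hcont.continuousAt (Icc_mem_nhds hx.1 hx.2))

theorem Lam_pos_s17 (hcont : ContinuousOn lam (Icc 0 t)) (hpos : ∀ x ∈ Ioo 0 t, 0 < lam x)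
    {x : ℝ} (hx : x ∈ Ioo 0 t) : 0 < Lam lam x :=
  intervalIntegral_pos_of_pos_on
    ((hcont.mono (Icc_subset_Icc_right hx.2.le)).intervalIntegrable_of_Icc hx.1.le)
    (fun y hy => hpos y ⟨hy.1, hy.2.trans hx.2⟩) hx.1

theorem intervalIntegrable_div_sqrt_Lam (hcont : ContinuousOn lam (Icc 0 t))
    (hpos : ∀ x ∈ Ioo 0 t, 0 < lam x) (ht : 0 ≤ t) :
    IntervalIntegrable (fun x => lam x / √(Lam lam x)) volume 0 t :=
  intervalIntegrable_div_sqrt ht (continuousOn_Lam_s17 hcont ht) (fun _ => hasDerivAt_Lam_s17 hcont)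
    (fun _ => Lam_pos_s17 hcont hpos) (fun x hx => (hpos x hx).le)

theorem integral_div_sqrt_Lam (hcont : ContinuousOn lam (Icc 0 t))
    (hpos : ∀ x ∈ Ioo 0 t, 0 < lam x) (ht : 0 ≤ t) :
    ∫ x in (0:ℝ)..t, lam x / √(Lam lam x) = 2 * √(Lam lam t) := by
  rw [integral_div_sqrt ht (continuousOn_Lam_s17 hcont ht) (fun _ => hasDerivAt_Lam_s17 hcont)
    (fun _ => Lam_pos_s17 hcont hpos) (fun x hx => (hpos x hx).le),
    show Lam lam 0 = 0 from integral_same, sqrt_zero, mul_zero, sub_zero]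

end Lam

theorem pd_zone_integral_bound_general
    (T : ℝ) (lam : ℝ → ℝ)
    (hcont : ContinuousOn lam (Set.Icc 0 T))
    (hpos : ∀ t ∈ Set.Ioc 0 T, 0 < lam t)
    (N r tstar : ℝ) (hr : Real.exp 1 ≤ r)
    (htstar : tstar ∈ Set.Ioc 0 T)
    (heq : Lam lam tstar * r = N * Real.log r) :
    (∫ τ in (0:ℝ)..tstar,
        Real.sqrt (1 + lam τ ^ 2 / Lam lam τ * r * Real.log r))
      ≤ T + 2 * Real.sqrt N * Real.log r := by
  obtain ⟨ht0, htT⟩ := htstar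
  have hcont' : ContinuousOn lam (Icc 0 tstar) := hcont.mono (Icc_subset_Icc_right htT)
  have hpos' : ∀ x ∈ Ioc 0 tstar, 0 < lam x := fun x hx => hpos x ⟨hx.1, hx.2.trans htT⟩
  have hposIoo : ∀ x ∈ Ioo 0 tstar, 0 < lam x := fun x hx => hpos' x (Ioo_subset_Ioc_self hx)
  have hr1 : 1 ≤ r := by linarith [add_one_le_exp (1 : ℝ)]
  have hlog : 0 ≤ log r := log_nonneg hr1
  have hrlog : 0 ≤ r * log r := mul_nonneg (zero_le_one.trans hr1) hlog
  have hg_int := intervalIntegrable_div_sqrt_Lam hcont' hposIoo ht0.le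
  have hg := integral_div_sqrt_Lam hcont' hposIoo ht0.le
  have hbound : ∀ τ ∈ Ioc 0 tstar, √(1 + lam τ ^ 2 / Lam lam τ * r * log r) ≤
      1 + √(r * log r) * (lam τ / √(Lam lam τ)) := fun τ hτ => by
    simpa only [mul_assoc, abs_of_pos (hpos' τ hτ)] using
      sqrt_one_add_sq_div_mul_le (lam τ) (Lam lam τ) hrlog
  have hzone : √(r * log r) * √(Lam lam tstar) = √N * log r := by
    have h : r * log r * Lam lam tstar = N * log r ^ 2 := by linear_combination log r * heq
    rw [← sqrt_mul hrlog, h, sqrt_mul' _ (sq_nonneg _), sqrt_sq hlog]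
  calc (∫ τ in (0:ℝ)..tstar, √(1 + lam τ ^ 2 / Lam lam τ * r * log r))
      ≤ ∫ τ in (0:ℝ)..tstar, (1 + √(r * log r) * (lam τ / √(Lam lam τ))) :=
        integral_mono_of_nonneg_on_Ioc ht0.le
          (intervalIntegrable_const.add (hg_int.const_mul _)) (fun _ _ => sqrt_nonneg _) hbound
    _ = tstar + 2 * (√(r * log r) * √(Lam lam tstar)) := by
        rw [intervalIntegral.integral_add intervalIntegrable_const (hg_int.const_mul _),
          intervalIntegral.integral_const_mul, hg]
        simp only [intervalIntegral.integral_const, sub_zero, smul_eq_mul, mul_one]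
        ring
    _ ≤ T + 2 * √N * log r := by rw [hzone]; linarith

/-- The pseudodifferential-zone integral bound used before Proposition 5.11 of the
paper: `∫₀^{t*} ρ(τ) dτ ≤ T + 2√N·ln r`, where `t*` is the zone-boundary time
(`Λ(t*)·r = N·ln r`) and `r` abstracts `⟨x⟩⟨ξ⟩`. -/
theorem pd_zone_integral_bound
    (T : ℝ) (hT : 0 < T) (lam : ℝ → ℝ)
    (hcont : ContinuousOn lam (Set.Icc 0 T))
    (hnn : ∀ t ∈ Set.Icc 0 T, 0 ≤ lam t)
    (hpos : ∀ t ∈ Set.Ioc 0 T, 0 < lam t)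
    (K : ℝ) (hK : 0 < K)
    (hKb : ∀ t ∈ Set.Ioc 0 T, lam t ^ 2 ≤ K * Lam lam t)
    (N r tstar : ℝ) (hN : 0 < N) (hr : Real.exp 1 ≤ r)
    (htstar : tstar ∈ Set.Ioc 0 T)
    (heq : Lam lam tstar * r = N * Real.log r) :
    (∫ τ in (0:ℝ)..tstar,
        Real.sqrt (1 + lam τ ^ 2 / Lam lam τ * r * Real.log r))
      ≤ T + 2 * Real.sqrt N * Real.log r :=
  pd_zone_integral_bound_general T lam hcont hpos N r tstar hr htstar heq
end
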